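/- arXiv:1601.06055 — 8 statements merged into one kernel-verified Lean document; each statement's English description precedes it below -/
import Mathlib

section
/- Let X and Z be finite nonempty sets, let C ⊆ X be a codebook with |C| = K·M for positive integers K and M, let P_X be the uniform distribution on C, let P_{Z|X} be a channel from X to Z, and let P_{XZ} := P_X × P_{Z|X} with output marginal P_Z. Then there exists a function π : C → {1,…,M} all of whose fibers π⁻¹(m) have exactly K elements (so that π(X) is uniform on {1,…,M} when X ~ P_X), such that for every γ > 0 and every PMF Q_Z on Z with Q_Z(z) > 0 for all z: d(P_{π(X)Z}, P_{π(X)} × P_Z) ≤ E_γ(P_{XZ}, P_X × Q_Z) + (1/2)·√( (γ/K) · Σ_{x∈C,z∈Z} P_{XZ}(x,z)·exp(−|ln(P_{Z|X}(z|x)/Q_Z(z)) − ln γ|) ), where P_{π(X)Z}(m,z) := Σ_{x∈π⁻¹(m)} P_X(x)·P_{Z|X}(z|x), and summands with P_{XZ}(x,z) = 0 are read as 0. -/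
/-!
Fix one balanced binning `f` of the codebook and average over the binnings `f ∘ σ`, `σ` running
over all permutations of the codebook. The binning minimising the left-hand side does not depend
on `γ` or `Q_Z` and is no worse than the average, so it suffices to bound the average for each
`γ` and `Q_Z`.

Split `P_{XZ}` into its truncation `a = min(P_{XZ}, γ P_X Q_Z)` and the rest; the rest has mass
`E_γ(P_{XZ}, P_X × Q_Z)` and moves the total variation distance by at most that much. For `a`,
Cauchy–Schwarz with weights `γ P_X Q_Z(z)` reduces everything to the average squared deviation of
the bin masses from their uniform share. Two distinct codewords share a bin for a fraction
`(K - 1)/(KM - 1) ≤ 1/M` of the permutations, so this average is at most `∑ a²`, and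
`a² / (γ P_X Q_Z) = P_{XZ} exp(-|log (P_{Z|X} / Q_Z) - log γ|)`.
-/

open scoped Classical
open Finset

noncomputable section

/-- `P` is a probability mass function on the finite type `A`. -/
def IsPMF {A : Type*} [Fintype A] (P : A → ℝ) : Prop :=
  (∀ a, 0 ≤ P a) ∧ ∑ a, P a = 1

/-- Total variation distance `d(P,Q) = (1/2) ∑ |P a - Q a|`. -/
def dTV {A : Type*} [Fintype A] (P Q : A → ℝ) : ℝ :=
  (1 / 2) * ∑ a, |P a - Q a|

/-- The `E_γ` metric: `E_γ(P,Q) = ∑_{a : P a ≥ γ Q a} (P a - γ Q a)`. -/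
def Egam {A : Type*} [Fintype A] (γ : ℝ) (P Q : A → ℝ) : ℝ :=
  ∑ a ∈ Finset.univ.filter (fun a => γ * Q a ≤ P a), (P a - γ * Q a)

lemma sum_offDiag_collision_eq {α β : Type*} [Fintype α] [DecidableEq α] [DecidableEq β]
    (f : α → β) {K : ℕ} (hf : ∀ b, #{i | f i = b} = K) :
    ∑ p ∈ (univ : Finset α).offDiag, (if f p.1 = f p.2 then (1 : ℝ) else 0)
      = Fintype.card α * K - Fintype.card α := by
  have hall := sum_union (disjoint_diag_offDiag (univ : Finset α))
    (f := fun p => if f p.1 = f p.2 then (1 : ℝ) else 0)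
  have hfib : ∀ p, (∑ q, if f p = f q then (1 : ℝ) else 0) = K := fun p => by
    simp_rw [sum_boole, eq_comm (a := f p), hf]
  rw [diag_union_offDiag, sum_product, diag, sum_map] at hall
  simp only [hfib, Function.Embedding.coeFn_mk, Function.diag, if_true, sum_const,
    card_univ, nsmul_eq_mul, mul_one] at hall
  linarith

namespace Binning

variable {α β : Type*} [Fintype α] [Fintype β] [DecidableEq β]

lemma exists_card_fiber_eq {K : ℕ} (h : Fintype.card α = Fintype.card β * K) :
    ∃ f : α → β, ∀ b, #{i | f i = b} = K := by
  let e : α ≃ β × Fin K := Fintype.equivOfCardEq (by simpa using h)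
  refine ⟨fun i => (e i).1, fun b => ?_⟩
  calc #{i | (e i).1 = b} = #{p : β × Fin K | p.1 = b} := card_equiv e (by simp)
    _ = K := by
        rw [card_filter, Fintype.sum_prod_type]
        simp [apply_ite]

def binDev (π : α → β) (v : α → ℝ) (b : β) : ℝ :=
  ∑ i with π i = b, v i - (Fintype.card β : ℝ)⁻¹ * ∑ i, v i

lemma binDev_add (π : α → β) (v w : α → ℝ) (b : β) :
    binDev π (v + w) b = binDev π v b + binDev π w b := by
  simp only [binDev, Pi.add_apply, sum_add_distrib]
  ring

lemma sum_abs_binDev_le (π : α → β) {v : α → ℝ} (hv : 0 ≤ v) :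
    ∑ b, |binDev π v b| ≤ 2 * ∑ i, v i := by
  have hT : 0 ≤ ∑ i, v i := sum_nonneg fun i _ => hv i
  calc ∑ b, |binDev π v b|
      ≤ ∑ b, (∑ i with π i = b, v i + (Fintype.card β : ℝ)⁻¹ * ∑ i, v i) := by
        refine sum_le_sum fun b _ => (abs_sub _ _).trans ?_
        rw [abs_of_nonneg (sum_nonneg fun i _ => hv i),
          abs_of_nonneg (mul_nonneg (by positivity) hT)]
    _ = (1 + Fintype.card β * (Fintype.card β : ℝ)⁻¹) * ∑ i, v i := by
        rw [sum_add_distrib, sum_fiberwise, sum_const, card_univ, nsmul_eq_mul]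
        ring
    _ ≤ 2 * ∑ i, v i := by
        gcongr
        linarith [mul_inv_le_one (a := (Fintype.card β : ℝ))]

lemma sum_abs_binDev_le_of_le (π : α → β) {v a : α → ℝ} (hav : a ≤ v) :
    ∑ b, |binDev π v b| ≤ ∑ b, |binDev π a b| + 2 * ∑ i, (v i - a i) := by
  have hsplit : v = a + (v - a) := (add_sub_cancel a v).symm
  calc ∑ b, |binDev π v b| ≤ ∑ b, (|binDev π a b| + |binDev π (v - a) b|) := by
        refine sum_le_sum fun b _ => ?_
        rw [hsplit, binDev_add, add_sub_cancel_left]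
        exact abs_add_le _ _
    _ ≤ _ := by
        rw [sum_add_distrib]
        gcongr
        exact sum_abs_binDev_le π (sub_nonneg.mpr hav)

lemma sum_sq_sum_filter_eq (π : α → β) (a : α → ℝ) :
    ∑ b, (∑ i with π i = b, a i) ^ 2 = ∑ i, ∑ j, if π i = π j then a i * a j else 0 := by
  simp_rw [sq, sum_mul_sum, sum_filter]
  rw [sum_comm]
  refine sum_congr rfl fun i _ => ?_
  simp [eq_comm]

lemma sum_binDev_sq (π : α → β) (a : α → ℝ) :
    ∑ b, binDev π a b ^ 2
      = ∑ b, (∑ i with π i = b, a i) ^ 2 - (Fintype.card β : ℝ)⁻¹ * (∑ i, a i) ^ 2 := by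
  have hM : (Fintype.card β : ℝ) * (Fintype.card β : ℝ)⁻¹ ^ 2 = (Fintype.card β : ℝ)⁻¹ := by
    rcases eq_or_ne (Fintype.card β : ℝ) 0 with h | h
    · simp [h]
    · field_simp
  simp only [binDev, sub_sq, sum_add_distrib, sum_sub_distrib, ← sum_mul, ← mul_sum,
    sum_fiberwise, sum_const, card_univ, nsmul_eq_mul]
  linear_combination (∑ i, a i) ^ 2 * hM

variable [DecidableEq α]

lemma card_offDiag_mul_sum_perm {i j : α} (hij : i ≠ j) (F : α → α → ℝ) :
    (#(univ : Finset α).offDiag : ℝ) * ∑ σ : Equiv.Perm α, F (σ i) (σ j)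
      = Fintype.card (Equiv.Perm α) * ∑ p ∈ (univ : Finset α).offDiag, F p.1 p.2 := by
  have hpair : ∀ p ∈ (univ : Finset α).offDiag,
      ∑ σ : Equiv.Perm α, F (σ p.1) (σ p.2) = ∑ σ : Equiv.Perm α, F (σ i) (σ j) := by
    intro p hp
    obtain ⟨ρ, hρ₁, hρ₂⟩ := MulAction.is_two_pretransitive_iff.mp
      (Equiv.Perm.isMultiplyPretransitive α 2) (mem_offDiag.mp hp).2.2 hij
    rw [← Equiv.sum_comp (Equiv.mulRight ρ)]
    simp only [Equiv.coe_mulRight, Equiv.Perm.mul_apply]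
    rw [← Equiv.Perm.smul_def ρ, hρ₁, ← Equiv.Perm.smul_def ρ, hρ₂]
  have hperm : ∀ σ : Equiv.Perm α,
      ∑ p ∈ (univ : Finset α).offDiag, F (σ p.1) (σ p.2)
        = ∑ p ∈ (univ : Finset α).offDiag, F p.1 p.2 := fun σ =>
    sum_equiv (σ.prodCongr σ) (by simp [mem_offDiag]) (by simp)
  calc (#(univ : Finset α).offDiag : ℝ) * ∑ σ : Equiv.Perm α, F (σ i) (σ j)
      = ∑ p ∈ (univ : Finset α).offDiag, ∑ σ : Equiv.Perm α, F (σ p.1) (σ p.2) := by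
        rw [sum_congr rfl hpair, sum_const, nsmul_eq_mul]
    _ = ∑ σ : Equiv.Perm α, ∑ p ∈ (univ : Finset α).offDiag, F p.1 p.2 := by
        rw [sum_comm]
        exact sum_congr rfl fun σ _ => hperm σ
    _ = _ := by rw [sum_const, card_univ, nsmul_eq_mul]

lemma card_mul_sum_perm_collision_le (f : α → β) {K : ℕ} (hf : ∀ b, #{i | f i = b} = K)
    {i j : α} (hij : i ≠ j) :
    (Fintype.card β : ℝ) * ∑ σ : Equiv.Perm α, (if f (σ i) = f (σ j) then 1 else 0)
      ≤ Fintype.card (Equiv.Perm α) := by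
  set N := Fintype.card α
  set M := Fintype.card β
  set P := (Fintype.card (Equiv.Perm α) : ℝ)
  have hN : (N : ℝ) = K * M := by
    have := card_eq_sum_card_fiberwise (s := univ) (t := univ) (f := f) (fun _ _ => mem_univ _)
    simp only [card_univ, hf, sum_const, smul_eq_mul] at this
    simp only [N, this]; push_cast; ring
  have hM : (1 : ℝ) ≤ M := by exact_mod_cast Fintype.card_pos_iff.mpr ⟨f i⟩
  have hN2 : (1 : ℝ) < N := by exact_mod_cast Fintype.one_lt_card_iff.mpr ⟨i, j, hij⟩
  have hpair := card_offDiag_mul_sum_perm hij fun p q => if f p = f q then (1 : ℝ) else 0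
  rw [sum_offDiag_collision_eq f hf, offDiag_card, card_univ,
    Nat.cast_sub (Nat.le_mul_self N)] at hpair
  push_cast at hpair
  have key : ((N : ℝ) * N - N) * (M * ∑ σ : Equiv.Perm α, (if f (σ i) = f (σ j) then 1 else 0))
      ≤ ((N : ℝ) * N - N) * P := by
    calc ((N : ℝ) * N - N) * (M * ∑ σ : Equiv.Perm α, (if f (σ i) = f (σ j) then 1 else 0))
        = P * N * (N - M) := by rw [mul_left_comm, hpair, hN]; ring
      _ ≤ P * N * (N - 1) := by gcongr
      _ = ((N : ℝ) * N - N) * P := by ring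
  exact le_of_mul_le_mul_left key (by nlinarith)

lemma sum_perm_sum_binDev_sq_le (f : α → β) {K : ℕ} (hf : ∀ b, #{i | f i = b} = K)
    {a : α → ℝ} (ha : 0 ≤ a) :
    ∑ σ : Equiv.Perm α, ∑ b, binDev (f ∘ σ) a b ^ 2
      ≤ Fintype.card (Equiv.Perm α) * ∑ i, a i ^ 2 := by
  set M := (Fintype.card β : ℝ)
  set P := (Fintype.card (Equiv.Perm α) : ℝ)
  set c : α → α → ℝ := fun i j =>
    ∑ σ : Equiv.Perm α, if f (σ i) = f (σ j) then 1 else 0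
  have hc : ∀ i j, c i j ≤ M⁻¹ * P + if i = j then P else 0 := by
    intro i j
    rcases eq_or_ne i j with rfl | hij
    · simp [c, P, card_univ]
      positivity
    · have hM : 0 < M := Nat.cast_pos.mpr (Fintype.card_pos_iff.mpr ⟨f i⟩)
      rw [if_neg hij, add_zero, inv_mul_eq_div, le_div_iff₀ hM, mul_comm]
      exact card_mul_sum_perm_collision_le f hf hij
  calc ∑ σ : Equiv.Perm α, ∑ b, binDev (f ∘ σ) a b ^ 2
      = ∑ i, ∑ j, c i j * (a i * a j) - P * (M⁻¹ * (∑ i, a i) ^ 2) := by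
        simp only [sum_binDev_sq, sum_sq_sum_filter_eq, sum_sub_distrib, sum_const, card_univ,
          nsmul_eq_mul, Function.comp_apply, c, sum_mul]
        rw [sum_comm]
        refine congrArg (· - _) (sum_congr rfl fun i _ => ?_)
        rw [sum_comm]
        exact sum_congr rfl fun j _ => sum_congr rfl fun σ _ => by split_ifs <;> simp
    _ ≤ ∑ i, ∑ j, (M⁻¹ * P + if i = j then P else 0) * (a i * a j)
          - P * (M⁻¹ * (∑ i, a i) ^ 2) := by
        gcongr with i _ j _
        · exact mul_nonneg (ha i) (ha j)
        · exact hc i j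
    _ = P * ∑ i, a i ^ 2 := by
        simp only [add_mul, sum_add_distrib, ite_mul, zero_mul, sum_ite_eq, mem_univ, if_true,
          ← mul_sum, sq, sum_mul_sum]
        ring

lemma sum_perm_sum_abs_binDev_le_sqrt {Z : Type*} [Fintype Z] (f : α → β) {K : ℕ}
    (hf : ∀ b, #{i | f i = b} = K) {a : α → Z → ℝ} (ha : 0 ≤ a) {t : Z → ℝ}
    (ht : ∀ z, 0 < t z) :
    ∑ σ : Equiv.Perm α, ∑ z, ∑ b, |binDev (f ∘ σ) (fun i => a i z) b|
      ≤ Fintype.card (Equiv.Perm α) *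
          Real.sqrt (Fintype.card β * (∑ z, t z) * ∑ i, ∑ z, a i z ^ 2 / t z) := by
  set P := (Fintype.card (Equiv.Perm α) : ℝ)
  set D : Equiv.Perm α → Z → β → ℝ := fun σ z b => binDev (f ∘ σ) (fun i => a i z) b
  set S := ∑ σ : Equiv.Perm α, ∑ z, ∑ b, |D σ z b|
  set X := Fintype.card β * (∑ z, t z) * ∑ i, ∑ z, a i z ^ 2 / t z
  have hcs := sum_sq_le_sum_mul_sum_of_sq_le_mul (univ : Finset (Equiv.Perm α × Z × β))
    (r := fun x => |D x.1 x.2.1 x.2.2|) (f := fun x => t x.2.1)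
    (g := fun x => D x.1 x.2.1 x.2.2 ^ 2 / t x.2.1) (fun x _ => (ht x.2.1).le)
    (fun x _ => div_nonneg (sq_nonneg _) (ht x.2.1).le)
    (fun x _ => by rw [sq_abs, mul_div_cancel₀ _ (ht x.2.1).ne'])
  simp only [Fintype.sum_prod_type, sum_const, card_univ, nsmul_eq_mul, ← mul_sum] at hcs
  have hvar : ∑ σ : Equiv.Perm α, ∑ z, ∑ b, D σ z b ^ 2 / t z
      ≤ P * ∑ i, ∑ z, a i z ^ 2 / t z := by
    rw [sum_comm, sum_comm (s := univ) (t := univ) (f := fun i z => a i z ^ 2 / t z), mul_sum]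
    refine sum_le_sum fun z _ => ?_
    simp only [← sum_div, ← mul_div_assoc]
    gcongr
    · exact (ht z).le
    · exact sum_perm_sum_binDev_sq_le f hf fun i => ha i z
  have hS2 : S ^ 2 ≤ P ^ 2 * X :=
    calc S ^ 2 ≤ _ := hcs
      _ ≤ P * (Fintype.card β * ∑ z, t z) * (P * ∑ i, ∑ z, a i z ^ 2 / t z) := by
        gcongr
        have := sum_nonneg fun z (_ : z ∈ univ) => (ht z).le
        positivity
      _ = P ^ 2 * X := by ring
  calc S = Real.sqrt (S ^ 2) := (Real.sqrt_sq (by positivity)).symm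
    _ ≤ Real.sqrt (P ^ 2 * X) := Real.sqrt_le_sqrt hS2
    _ = P * Real.sqrt X := by rw [Real.sqrt_mul (sq_nonneg _), Real.sqrt_sq (by positivity)]

lemma sum_perm_sum_abs_binDev_le {Z : Type*} [Fintype Z] (f : α → β) {K : ℕ}
    (hf : ∀ b, #{i | f i = b} = K) {P : α → Z → ℝ} (hP : 0 ≤ P) {t : Z → ℝ}
    (ht : ∀ z, 0 < t z) :
    ∑ σ : Equiv.Perm α, ∑ z, ∑ b, |binDev (f ∘ σ) (fun i => P i z) b|
      ≤ Fintype.card (Equiv.Perm α) * (2 * ∑ i, ∑ z, (P i z - min (P i z) (t z)) +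
          Real.sqrt (Fintype.card β * (∑ z, t z) *
            ∑ i, ∑ z, min (P i z) (t z) ^ 2 / t z)) := by
  have hmin : (0 : α → Z → ℝ) ≤ fun i z => min (P i z) (t z) :=
    fun i z => le_min (hP i z) (ht z).le
  calc ∑ σ : Equiv.Perm α, ∑ z, ∑ b, |binDev (f ∘ σ) (fun i => P i z) b|
      ≤ ∑ σ : Equiv.Perm α, ∑ z, (∑ b, |binDev (f ∘ σ) (fun i => min (P i z) (t z)) b| +
          2 * ∑ i, (P i z - min (P i z) (t z))) :=
        sum_le_sum fun σ _ => sum_le_sum fun z _ =>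
          sum_abs_binDev_le_of_le _ fun i => min_le_left _ _
    _ = ∑ σ : Equiv.Perm α, ∑ z, ∑ b, |binDev (f ∘ σ) (fun i => min (P i z) (t z)) b| +
          Fintype.card (Equiv.Perm α) * (2 * ∑ i, ∑ z, (P i z - min (P i z) (t z))) := by
        simp only [sum_add_distrib, ← mul_sum, sum_const, card_univ, nsmul_eq_mul]
        rw [sum_comm (s := univ) (t := univ) (f := fun i z => P i z - min (P i z) (t z))]
        ring
    _ ≤ _ := by
        rw [mul_add, add_comm]
        gcongr
        exact sum_perm_sum_abs_binDev_le_sqrt f hf hmin ht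

end Binning

open Binning

lemma le_of_forall_le_of_sum_le_card_mul {ι : Type*} [Fintype ι] {F : ι → ℝ} {i : ι}
    (hi : ∀ j, F i ≤ F j) {B : ℝ} (h : ∑ j, F j ≤ Fintype.card ι * B) : F i ≤ B := by
  have hmin := card_nsmul_le_sum univ F (F i) fun j _ => hi j
  rw [card_univ, nsmul_eq_mul] at hmin
  exact le_of_mul_le_mul_left (hmin.trans h) (Nat.cast_pos.mpr (Fintype.card_pos_iff.mpr ⟨i⟩))

lemma min_sq_div_eq_mul_exp_neg_abs_log {w t : ℝ} (hw : 0 ≤ w) (ht : 0 < t) :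
    min w t ^ 2 / t = w * Real.exp (-|Real.log (w / t)|) := by
  rcases hw.eq_or_lt with rfl | hw
  · simp [ht.le]
  rcases le_total w t with hwt | htw
  · rw [min_eq_left hwt, abs_of_nonpos (Real.log_nonpos (by positivity) ((div_le_one ht).mpr hwt)),
      neg_neg, Real.exp_log (by positivity)]
    ring
  · rw [min_eq_right htw, abs_of_nonneg (Real.log_nonneg ((one_le_div ht).mpr htw)),
      Real.exp_neg, Real.exp_log (by positivity)]
    field_simp

lemma mul_exp_neg_abs_log_div_sub_log {p w q γ : ℝ} (hp : 0 < p) (hw : 0 ≤ w) (hq : 0 < q)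
    (hγ : 0 < γ) :
    p * w * Real.exp (-|Real.log (w / q) - Real.log γ|)
      = min (p * w) (γ * (p * q)) ^ 2 / (γ * (p * q)) := by
  rw [min_sq_div_eq_mul_exp_neg_abs_log (by positivity) (by positivity)]
  rcases hw.eq_or_lt with rfl | hw
  · simp
  · rw [show p * w / (γ * (p * q)) = w / q / γ by field_simp, Real.log_div (by positivity) hγ.ne']

lemma Egam_eq_sum_sub_min {A : Type*} [Fintype A] (γ : ℝ) (P Q : A → ℝ) :
    Egam γ P Q = ∑ a, (P a - min (P a) (γ * Q a)) := by
  rw [Egam, sum_filter]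
  refine sum_congr rfl fun a _ => ?_
  split_ifs with h
  · rw [min_eq_right h]
  · rw [min_eq_left (le_of_not_ge h), sub_self]

lemma sum_filter_dite_eq {X β M : Type*} [AddCommMonoid M] [DecidableEq β] (C : Finset X)
    (g : C → β) (d : β) (h : X → M) (b : β) :
    ∑ x ∈ C with (if hx : x ∈ C then g ⟨x, hx⟩ else d) = b, h x = ∑ c : C with g c = b, h c := by
  rw [sum_filter, sum_filter, ← sum_coe_sort C]
  simp

lemma sum_mul_exp_eq_of_uniform {X Z : Type*} [Fintype Z] {C : Finset X} {PX : X → ℝ} {p : ℝ}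
    (hPX : ∀ x, PX x = if x ∈ C then p else 0) (hp : 0 < p)
    {W : X → Z → ℝ} (hW : 0 ≤ W) {Q : Z → ℝ} (hQ : ∀ z, 0 < Q z) {γ : ℝ} (hγ : 0 < γ) :
    ∑ x ∈ C, ∑ z, PX x * W x z * Real.exp (-|Real.log (W x z / Q z) - Real.log γ|)
      = ∑ c : C, ∑ z, min (p * W c z) (γ * (p * Q z)) ^ 2 / (γ * (p * Q z)) := by
  rw [← sum_coe_sort C]
  simp only [hPX, coe_mem, if_true]
  exact sum_congr rfl fun c _ => sum_congr rfl fun z _ =>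
    mul_exp_neg_abs_log_div_sub_log hp (hW c z) (hQ z) hγ

section Codebook

variable {X Z : Type*} [Fintype X] [Fintype Z] {C : Finset X} {PX : X → ℝ} {p : ℝ}

lemma sum_mul_eq_of_uniform (hPX : ∀ x, PX x = if x ∈ C then p else 0) (g : X → ℝ) :
    ∑ x, PX x * g x = ∑ c : C, p * g c := by
  rw [← sum_subset (subset_univ C) fun x _ hx => by rw [hPX, if_neg hx, zero_mul],
    ← sum_coe_sort C]
  simp only [hPX, coe_mem, if_true]

lemma Egam_eq_of_uniform (hPX : ∀ x, PX x = if x ∈ C then p else 0) (γ : ℝ)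
    (W : X → Z → ℝ) (Q : Z → ℝ) :
    Egam γ (fun q : X × Z => PX q.1 * W q.1 q.2) (fun q : X × Z => PX q.1 * Q q.2)
      = ∑ c : C, ∑ z, (p * W c z - min (p * W c z) (γ * (p * Q z))) := by
  rw [Egam_eq_sum_sub_min, Fintype.sum_prod_type,
    ← sum_subset (subset_univ C) fun x _ hx => by simp [hPX, hx], ← sum_coe_sort C]
  simp only [hPX, coe_mem, if_true]

lemma dTV_binning_eq_of_uniform {β : Type*} [Fintype β] [DecidableEq β]
    (hPX : ∀ x, PX x = if x ∈ C then p else 0) (g : C → β) (d : β) (W : X → Z → ℝ) :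
    dTV (fun q : β × Z =>
        ∑ x ∈ C with (if hx : x ∈ C then g ⟨x, hx⟩ else d) = q.1, PX x * W x q.2)
      (fun q : β × Z => (Fintype.card β : ℝ)⁻¹ * ∑ x, PX x * W x q.2)
      = 1 / 2 * ∑ z, ∑ b, |binDev g (fun c => p * W c z) b| := by
  rw [dTV, Fintype.sum_prod_type, sum_comm]
  congr 1
  refine sum_congr rfl fun z _ => sum_congr rfl fun b _ => ?_
  rw [binDev, sum_filter_dite_eq, sum_mul_eq_of_uniform hPX]
  simp only [hPX, coe_mem, if_true]

end Codebook

theorem stmt0_general {X Z : Type*} [Fintype X] [Fintype Z]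
    (K M : ℕ) (hK : 0 < K) (hM : 0 < M)
    (C : Finset X) (hC : C.card = K * M)
    (PX : X → ℝ) (hPX : ∀ x, PX x = if x ∈ C then (((K * M : ℕ) : ℝ))⁻¹ else 0)
    (Wch : X → Z → ℝ) (hW : ∀ x, IsPMF (Wch x)) :
    ∃ π : X → Fin M,
      (∀ m : Fin M, (C.filter (fun x => π x = m)).card = K) ∧
      ∀ γ : ℝ, 0 < γ → ∀ QZ : Z → ℝ, IsPMF QZ → (∀ z, 0 < QZ z) →
        dTV (fun p : Fin M × Z => ∑ x ∈ C.filter (fun x => π x = p.1), PX x * Wch x p.2)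
            (fun p : Fin M × Z => ((M : ℝ))⁻¹ * ∑ x, PX x * Wch x p.2)
          ≤ Egam γ (fun p : X × Z => PX p.1 * Wch p.1 p.2)
                   (fun p : X × Z => PX p.1 * QZ p.2)
            + (1 / 2) * Real.sqrt ((γ / K) *
                ∑ x ∈ C, ∑ z, PX x * Wch x z *
                  Real.exp (-|Real.log (Wch x z / QZ z) - Real.log γ|)) := by
  set p : ℝ := ((K * M : ℕ) : ℝ)⁻¹
  have hp : 0 < p := by positivity
  obtain ⟨f, hf⟩ := exists_card_fiber_eq (α := C) (β := Fin M) (K := K) (by simp [hC, mul_comm])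
  obtain ⟨σ, -, hσ⟩ := exists_min_image univ
    (fun σ : Equiv.Perm C => ∑ z, ∑ m, |binDev (f ∘ σ) (fun c => p * Wch c z) m|) univ_nonempty
  refine ⟨fun x => if hx : x ∈ C then (f ∘ σ) ⟨x, hx⟩ else ⟨0, hM⟩, fun m => ?_,
    fun γ hγ QZ hQZ hQpos => ?_⟩
  · rw [card_eq_sum_ones, sum_filter_dite_eq, ← card_eq_sum_ones, ← hf m]
    exact card_equiv σ (by simp)
  have hbound := sum_perm_sum_abs_binDev_le f hf (P := fun c z => p * Wch c z)
    (fun c z => mul_nonneg hp.le ((hW c).1 z)) (t := fun z => γ * (p * QZ z))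
    (fun z => by have := hQpos z; positivity)
  have hdTV := dTV_binning_eq_of_uniform hPX (f ∘ σ) ⟨0, hM⟩ Wch
  have hγK : (Fintype.card (Fin M) : ℝ) * ∑ z, γ * (p * QZ z) = γ / K := by
    rw [← mul_sum, ← mul_sum, hQZ.2, Fintype.card_fin]
    simp only [p, Nat.cast_mul]
    field_simp
  rw [hγK, ← sum_mul_exp_eq_of_uniform hPX hp (fun x z => (hW x).1 z) hQpos hγ] at hbound
  rw [Fintype.card_fin] at hdTV
  rw [hdTV, Egam_eq_of_uniform hPX]
  linarith [le_of_forall_le_of_sum_le_card_mul (fun σ' => hσ σ' (mem_univ σ')) hbound]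

/-- Privacy amplification lemma (Lemma 1): there is a balanced partition `π`
of the codebook `C` into `M` bins of size `K` such that for all `γ > 0` and all
everywhere-positive PMFs `Q_Z`, the total variation secrecy of `π(X)` is bounded by
`E_γ(P_{XZ}, P_X Q_Z) + (1/2)√((γ/K) E[exp(-|i(X;Z) - log γ|)])`. -/
theorem stmt0 {X Z : Type*} [Fintype X] [Fintype Z] [Nonempty X] [Nonempty Z]
    (K M : ℕ) (hK : 0 < K) (hM : 0 < M)
    (C : Finset X) (hC : C.card = K * M)
    (PX : X → ℝ) (hPX : ∀ x, PX x = if x ∈ C then (((K * M : ℕ) : ℝ))⁻¹ else 0)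
    (Wch : X → Z → ℝ) (hW : ∀ x, IsPMF (Wch x)) :
    ∃ π : X → Fin M,
      (∀ m : Fin M, (C.filter (fun x => π x = m)).card = K) ∧
      ∀ γ : ℝ, 0 < γ → ∀ QZ : Z → ℝ, IsPMF QZ → (∀ z, 0 < QZ z) →
        dTV (fun p : Fin M × Z => ∑ x ∈ C.filter (fun x => π x = p.1), PX x * Wch x p.2)
            (fun p : Fin M × Z => ((M : ℝ))⁻¹ * ∑ x, PX x * Wch x p.2)
          ≤ Egam γ (fun p : X × Z => PX p.1 * Wch p.1 p.2)
                   (fun p : X × Z => PX p.1 * QZ p.2)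
            + (1 / 2) * Real.sqrt ((γ / K) *
                ∑ x ∈ C, ∑ z, PX x * Wch x z *
                  Real.exp (-|Real.log (Wch x z / QZ z) - Real.log γ|)) :=
  stmt0_general K M hK hM C hC PX hPX Wch hW
end
end

section
/- Let P_{YZ|X} be a wiretap channel from finite X to finite Y × Z, and consider any (M,ε,δ) secrecy code with induced joint PMF P_{WXYZ} and marginals P_{WY}, P_{WZ}, P_W, P_Z. Then for every real τ with 0 < τ < 1 − δ and every PMF Q_Y on Y: M · τ · β_{1−ε}(P_{WY}, P_W × Q_Y) ≤ β_{δ+τ}(P_{WZ}, P_W × P_Z). -/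
open scoped Classical
open Finset

noncomputable section

/-- Optimal performance of a binary hypothesis test between `P` and `Q`:
`β_α(P,Q) = min { ∑ Q a * t a : t : A → [0,1], ∑ P a * t a ≥ α }`. -/
def betaHT {A : Type*} [Fintype A] (α : ℝ) (P Q : A → ℝ) : ℝ :=
  sInf {b : ℝ | ∃ t : A → ℝ, (∀ a, 0 ≤ t a ∧ t a ≤ 1) ∧
    α ≤ ∑ a, P a * t a ∧ b = ∑ a, Q a * t a}

/-! The legitimate decoder, read as the test `g y = m`, passes `P_{WY}` with probability
at least `1 - ε` and `P_W × Q_Y` with probability exactly `1 / M`, whatever `Q_Y`; so the left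
side is at most `τ`. Conversely, any test passing `P_{WZ}` with probability `δ + τ` passes
`P_W × P_Z` with probability at least `δ + τ - d(P_{WZ}, P_W × P_Z) ≥ τ`. -/

section HypothesisTesting

variable {A : Type*} [Fintype A]

lemma sum_mul_sub_sum_mul_le_dTV (P Q : A → ℝ) (hsum : ∑ a, P a = ∑ a, Q a)
    (t : A → ℝ) (ht : ∀ a, 0 ≤ t a ∧ t a ≤ 1) :
    ∑ a, P a * t a - ∑ a, Q a * t a ≤ dTV P Q := by
  have hpoint : ∀ a, (P a - Q a) * t a ≤ (|P a - Q a| + (P a - Q a)) / 2 := by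
    intro a
    obtain ⟨ht0, ht1⟩ := ht a
    rcases le_or_gt 0 (P a - Q a) with h | h
    · rw [abs_of_nonneg h]
      nlinarith
    · rw [abs_of_neg h]
      nlinarith
  have hzero : ∑ a, (P a - Q a) = 0 := by
    rw [Finset.sum_sub_distrib, hsum, sub_self]
  calc ∑ a, P a * t a - ∑ a, Q a * t a = ∑ a, (P a - Q a) * t a := by
        simp only [← Finset.sum_sub_distrib, sub_mul]
    _ ≤ ∑ a, (|P a - Q a| + (P a - Q a)) / 2 := Finset.sum_le_sum fun a _ => hpoint a
    _ = dTV P Q := by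
        rw [← Finset.sum_div, Finset.sum_add_distrib, hzero, dTV]
        ring

lemma betaHT_le_sum_mul {α : ℝ} {P Q : A → ℝ} (hQ : ∀ a, 0 ≤ Q a) (t : A → ℝ)
    (ht : ∀ a, 0 ≤ t a ∧ t a ≤ 1) (hα : α ≤ ∑ a, P a * t a) :
    betaHT α P Q ≤ ∑ a, Q a * t a := by
  refine csInf_le ⟨0, ?_⟩ ⟨t, ht, hα, rfl⟩
  rintro b ⟨s, hs, -, rfl⟩
  exact Finset.sum_nonneg fun a _ => mul_nonneg (hQ a) (hs a).1

lemma sub_dTV_le_betaHT {α : ℝ} {P Q : A → ℝ} (hsum : ∑ a, P a = ∑ a, Q a)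
    (hα : α ≤ ∑ a, P a) : α - dTV P Q ≤ betaHT α P Q := by
  refine le_csInf ⟨∑ a, Q a, fun _ => 1, fun _ => ⟨zero_le_one, le_rfl⟩, ?_, ?_⟩ ?_
  · simpa only [mul_one] using hα
  · simp only [mul_one]
  · rintro b ⟨t, ht, hPt, rfl⟩
    linarith [sum_mul_sub_sum_mul_le_dTV P Q hsum t ht]

end HypothesisTesting

section UniformMessage

variable {X B : Type*} [Fintype X] [Fintype B] {M : ℕ}

lemma sum_inv_mul_snd (hM : 0 < M) (Q : B → ℝ) :
    ∑ p : Fin M × B, (M : ℝ)⁻¹ * Q p.2 = ∑ b, Q b := by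
  rw [Fintype.sum_prod_type]
  simp only [← Finset.mul_sum, Finset.sum_const, Finset.card_univ, Fintype.card_fin,
    nsmul_eq_mul]
  field_simp

lemma sum_inv_mul_mixture_eq_one (hM : 0 < M) (enc : Fin M → X → ℝ)
    (henc : ∀ m, ∑ x, enc m x = 1) (V : X → B → ℝ) (hV : ∀ x, ∑ b, V x b = 1) :
    ∑ p : Fin M × B, (M : ℝ)⁻¹ * ∑ x, enc p.1 x * V x p.2 = 1 := by
  have hrow : ∀ m, ∑ b, ∑ x, enc m x * V x b = 1 := fun m => by
    rw [Finset.sum_comm]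
    simp only [← Finset.mul_sum, hV, mul_one, henc]
  rw [Fintype.sum_prod_type]
  simp only [← Finset.mul_sum, hrow, Finset.sum_const, Finset.card_univ, Fintype.card_fin,
    nsmul_eq_mul, mul_one]
  field_simp

lemma sum_inv_mul_snd_mul_ite_eq {Y : Type*} [Fintype Y] (g : Y → Fin M)
    (Q : Y → ℝ) :
    ∑ p : Fin M × Y, (M : ℝ)⁻¹ * Q p.2 * (if g p.2 = p.1 then 1 else 0)
      = (M : ℝ)⁻¹ * ∑ y, Q y := by
  rw [Fintype.sum_prod_type, Finset.sum_comm]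
  simp only [mul_ite, mul_one, mul_zero, Finset.sum_ite_eq, Finset.mem_univ, if_true,
    Finset.mul_sum]

end UniformMessage

section WiretapCode

variable {X Y Z : Type*} [Fintype X] [Fintype Y] [Fintype Z] {M : ℕ}

lemma IsPMF.sum_sum_fst {W : Y × Z → ℝ} (hW : IsPMF W) : ∑ y, ∑ z, W (y, z) = 1 := by
  rw [← Fintype.sum_prod_type]
  exact hW.2

lemma IsPMF.sum_sum_snd {W : Y × Z → ℝ} (hW : IsPMF W) : ∑ z, ∑ y, W (y, z) = 1 := by
  rw [Finset.sum_comm]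
  exact hW.sum_sum_fst

lemma sum_mul_marginal_fst (enc : Fin M → X → ℝ) (Wch : X → Y × Z → ℝ)
    (f : Fin M → Y → ℝ) :
    ∑ p : Fin M × Y, (M : ℝ)⁻¹ * (∑ x, enc p.1 x * ∑ z, Wch x (p.2, z)) * f p.1 p.2
      = ∑ m, ∑ x, ∑ p : Y × Z, (M : ℝ)⁻¹ * enc m x * Wch x p * f m p.1 := by
  simp only [Fintype.sum_prod_type, Finset.mul_sum, Finset.sum_mul]
  refine Finset.sum_congr rfl fun m _ => ?_
  rw [Finset.sum_comm]
  refine Finset.sum_congr rfl fun x _ => Finset.sum_congr rfl fun y _ =>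
    Finset.sum_congr rfl fun z _ => ?_
  ring

lemma betaHT_le_inv_of_reliable (Wch : X → Y × Z → ℝ) (hW : ∀ x, IsPMF (Wch x))
    (hM : 0 < M) (ε : ℝ) (enc : Fin M → X → ℝ) (henc : ∀ m, IsPMF (enc m))
    (g : Y → Fin M) (PWY : Fin M × Y → ℝ)
    (hPWY : ∀ p, PWY p = ((M : ℝ))⁻¹ * ∑ x, enc p.1 x * ∑ z, Wch x (p.2, z))
    (hrel : ∑ m, ∑ x, ∑ p : Y × Z,
        ((M : ℝ))⁻¹ * enc m x * Wch x p * (if g p.1 = m then 0 else 1) ≤ ε)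
    (QY : Y → ℝ) (hQY : IsPMF QY) :
    betaHT (1 - ε) PWY (fun p => ((M : ℝ))⁻¹ * QY p.2) ≤ (M : ℝ)⁻¹ := by
  have hQ : ∀ p : Fin M × Y, 0 ≤ (M : ℝ)⁻¹ * QY p.2 := fun p =>
    mul_nonneg (by positivity) (hQY.1 p.2)
  have htotal : ∑ p, PWY p = 1 := by
    simp only [hPWY]
    exact sum_inv_mul_mixture_eq_one hM enc (fun m => (henc m).2) _
      fun x => (hW x).sum_sum_fst
  have herror : ∑ p, PWY p * (if g p.2 = p.1 then 0 else 1) ≤ ε := by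
    simpa only [hPWY, mul_assoc] using
      (sum_mul_marginal_fst enc Wch fun m y => if g y = m then 0 else 1).trans_le hrel
  have hcorrect : 1 - ε ≤ ∑ p, PWY p * (if g p.2 = p.1 then 1 else 0) := by
    have hsplit : ∀ p : Fin M × Y, PWY p * (if g p.2 = p.1 then 1 else 0)
        = PWY p - PWY p * (if g p.2 = p.1 then 0 else 1) := fun p => by
      split_ifs <;> ring
    rw [Finset.sum_congr rfl fun p _ => hsplit p, Finset.sum_sub_distrib, htotal]
    linarith
  calc betaHT (1 - ε) PWY (fun p => ((M : ℝ))⁻¹ * QY p.2)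
      ≤ ∑ p : Fin M × Y, (M : ℝ)⁻¹ * QY p.2 * (if g p.2 = p.1 then 1 else 0) :=
        betaHT_le_sum_mul hQ _ (fun p => by split_ifs <;> norm_num) hcorrect
    _ = (M : ℝ)⁻¹ := by rw [sum_inv_mul_snd_mul_ite_eq, hQY.2, mul_one]

lemma le_betaHT_of_secret (Wch : X → Y × Z → ℝ) (hW : ∀ x, IsPMF (Wch x))
    (hM : 0 < M) (δ : ℝ) (enc : Fin M → X → ℝ) (henc : ∀ m, IsPMF (enc m))
    (PWZ : Fin M × Z → ℝ)
    (hPWZ : ∀ p, PWZ p = ((M : ℝ))⁻¹ * ∑ x, enc p.1 x * ∑ y, Wch x (y, p.2))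
    (PZ : Z → ℝ) (hPZ : ∀ z, PZ z = ∑ m, PWZ (m, z))
    (hsec : dTV PWZ (fun p => ((M : ℝ))⁻¹ * PZ p.2) ≤ δ) (τ : ℝ) (hτ : τ < 1 - δ) :
    τ ≤ betaHT (δ + τ) PWZ (fun p => ((M : ℝ))⁻¹ * PZ p.2) := by
  have htotal : ∑ p, PWZ p = 1 := by
    simp only [hPWZ]
    exact sum_inv_mul_mixture_eq_one hM enc (fun m => (henc m).2) _
      fun x => (hW x).sum_sum_snd
  have hproduct : ∑ p : Fin M × Z, (M : ℝ)⁻¹ * PZ p.2 = 1 := by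
    rw [sum_inv_mul_snd hM, ← htotal, Fintype.sum_prod_type_right]
    exact Finset.sum_congr rfl fun z _ => hPZ z
  have hbound := sub_dTV_le_betaHT (α := δ + τ) (htotal.trans hproduct.symm) (by linarith)
  linarith

end WiretapCode

theorem stmt2_general {X Y Z : Type*} [Fintype X] [Fintype Y] [Fintype Z]
    (Wch : X → Y × Z → ℝ) (hW : ∀ x, IsPMF (Wch x))
    (M : ℕ) (hM : 0 < M)
    (ε δ : ℝ)
    (enc : Fin M → X → ℝ) (henc : ∀ m, IsPMF (enc m))
    (g : Y → Fin M)
    (PWY : Fin M × Y → ℝ)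
    (hPWY : ∀ p, PWY p = ((M : ℝ))⁻¹ * ∑ x, enc p.1 x * ∑ z, Wch x (p.2, z))
    (PWZ : Fin M × Z → ℝ)
    (hPWZ : ∀ p, PWZ p = ((M : ℝ))⁻¹ * ∑ x, enc p.1 x * ∑ y, Wch x (y, p.2))
    (PZ : Z → ℝ) (hPZ : ∀ z, PZ z = ∑ m, PWZ (m, z))
    (hrel : ∑ m, ∑ x, ∑ p : Y × Z,
        ((M : ℝ))⁻¹ * enc m x * Wch x p * (if g p.1 = m then 0 else 1) ≤ ε)
    (hsec : dTV PWZ (fun p => ((M : ℝ))⁻¹ * PZ p.2) ≤ δ) :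
    ∀ τ : ℝ, 0 < τ → τ < 1 - δ → ∀ QY : Y → ℝ, IsPMF QY →
      (M : ℝ) * τ * betaHT (1 - ε) PWY (fun p => ((M : ℝ))⁻¹ * QY p.2)
        ≤ betaHT (δ + τ) PWZ (fun p => ((M : ℝ))⁻¹ * PZ p.2) := by
  intro τ _ hτ QY hQY
  calc (M : ℝ) * τ * betaHT (1 - ε) PWY (fun p => ((M : ℝ))⁻¹ * QY p.2)
      ≤ (M : ℝ) * τ * (M : ℝ)⁻¹ := by
        gcongr
        exact betaHT_le_inv_of_reliable Wch hW hM ε enc henc g PWY hPWY hrel QY hQY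
    _ = τ := by field_simp
    _ ≤ betaHT (δ + τ) PWZ (fun p => ((M : ℝ))⁻¹ * PZ p.2) :=
        le_betaHT_of_secret Wch hW hM δ enc henc PWZ hPWZ PZ hPZ hsec τ hτ

/-- General converse bound (Theorem 2): every `(M,ε,δ)` secrecy code satisfies
`M τ β_{1-ε}(P_{WY}, P_W Q_Y) ≤ β_{δ+τ}(P_{WZ}, P_W P_Z)` for all `0 < τ < 1 - δ`
and every PMF `Q_Y`. -/
theorem stmt2 {X Y Z : Type*} [Fintype X] [Fintype Y] [Fintype Z]
    [Nonempty X] [Nonempty Y] [Nonempty Z]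
    (Wch : X → Y × Z → ℝ) (hW : ∀ x, IsPMF (Wch x))
    (M : ℕ) (hM : 0 < M)
    (ε δ : ℝ) (hε0 : 0 ≤ ε) (hε1 : ε ≤ 1) (hδ0 : 0 ≤ δ) (hδ1 : δ ≤ 1)
    (enc : Fin M → X → ℝ) (henc : ∀ m, IsPMF (enc m))
    (g : Y → Fin M)
    (PWY : Fin M × Y → ℝ)
    (hPWY : ∀ p, PWY p = ((M : ℝ))⁻¹ * ∑ x, enc p.1 x * ∑ z, Wch x (p.2, z))
    (PWZ : Fin M × Z → ℝ)
    (hPWZ : ∀ p, PWZ p = ((M : ℝ))⁻¹ * ∑ x, enc p.1 x * ∑ y, Wch x (y, p.2))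
    (PZ : Z → ℝ) (hPZ : ∀ z, PZ z = ∑ m, PWZ (m, z))
    (hrel : ∑ m, ∑ x, ∑ p : Y × Z,
        ((M : ℝ))⁻¹ * enc m x * Wch x p * (if g p.1 = m then 0 else 1) ≤ ε)
    (hsec : dTV PWZ (fun p => ((M : ℝ))⁻¹ * PZ p.2) ≤ δ) :
    ∀ τ : ℝ, 0 < τ → τ < 1 - δ → ∀ QY : Y → ℝ, IsPMF QY →
      (M : ℝ) * τ * betaHT (1 - ε) PWY (fun p => ((M : ℝ))⁻¹ * QY p.2)
        ≤ betaHT (δ + τ) PWZ (fun p => ((M : ℝ))⁻¹ * PZ p.2) :=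
  stmt2_general Wch hW M hM ε δ enc henc g PWY hPWY PWZ hPWZ PZ hPZ hrel hsec
end
end

section
/- Let X and Z be finite nonempty sets, C ⊆ X with |C| = N, and P_{Z|X} a channel from X to Z. Let π : C → {1,…,M} be a surjection and, for each m ∈ {1,…,M}, let P_{X|W=m} be a PMF on X supported on π⁻¹(m). Let W be uniform on {1,…,M}, let P_{WXZ}(m,x,z) := (1/M)·P_{X|W}(x|m)·P_{Z|X}(z|x) with marginals P_{WZ}, P_W, and P_{XZ}, and let P^unif_X be the uniform distribution on C. Then for every PMF Q_Z on Z: d(P_{WZ}, P_W × Q_Z) ≥ E_{N/M}(P_{XZ}, P^unif_X × Q_Z), where (P^unif_X × Q_Z)(x,z) := P^unif_X(x)·Q_Z(z). -/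
/-!
Write `a(x,z) = P_{X|W}(x|π x) P_{Z|X}(z|x) / M`. For `x ∈ C` one has `(N/M) P^unif_X(x) = 1/M`,
so each positive part `(P_{XZ} - (N/M) P^unif_X Q_Z)⁺` making up `E_{N/M}` is at most
`(a(x,z) - Q_Z(z)/M)⁺` (off `C` it vanishes). Grouping the `x` by their message `π x` and using
`∑ (a_i - b)⁺ ≤ (∑ a_i - b)⁺` for nonnegative `a_i, b` bounds the sum by
`∑ (P_{WZ}(m,z) - Q_Z(z)/M)⁺`, which is the total variation distance because `P_{WZ}` and
`P_W × Q_Z` have the same total mass.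
-/

open scoped Classical
open Finset

noncomputable section

lemma IsPMF.bind {A B : Type*} [Fintype A] [Fintype B] {p : A → ℝ} {W : A → B → ℝ}
    (hp : IsPMF p) (hW : ∀ a, IsPMF (W a)) : IsPMF (fun b => ∑ a, p a * W a b) := by
  refine ⟨fun b => sum_nonneg fun a _ => mul_nonneg (hp.1 a) ((hW a).1 b), ?_⟩
  rw [sum_comm]
  simp only [← mul_sum, (hW _).2, mul_one]
  exact hp.2

lemma Egam_eq_sum_posPart {A : Type*} [Fintype A] (γ : ℝ) (P Q : A → ℝ) :
    Egam γ P Q = ∑ a, (P a - γ * Q a)⁺ := by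
  rw [Egam, sum_filter]
  refine sum_congr rfl fun a _ => ?_
  simp only [posPart_eq_ite, sub_nonneg]

lemma dTV_eq_sum_posPart {A : Type*} [Fintype A] {P Q : A → ℝ}
    (h : ∑ a, P a = ∑ a, Q a) : dTV P Q = ∑ a, (P a - Q a)⁺ := by
  have hzero : ∑ a, (P a - Q a) = 0 := by rw [sum_sub_distrib, h, sub_self]
  have htwice : ∀ t : ℝ, |t| = 2 * t⁺ - t := fun t => by
    linarith [posPart_add_negPart t, posPart_sub_negPart t]
  simp only [dTV, htwice, sum_sub_distrib, ← mul_sum, hzero]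
  ring

lemma posPart_sub_add_posPart_sub_le {x y b : ℝ} (hx : 0 ≤ x) (hy : 0 ≤ y) (hb : 0 ≤ b) :
    (x - b)⁺ + (y - b)⁺ ≤ (x + y - b)⁺ := by
  simp only [posPart_eq_ite]
  split_ifs <;> linarith

lemma sum_posPart_sub_le {ι : Type*} (s : Finset ι) {a : ι → ℝ} {b : ℝ}
    (ha : ∀ i ∈ s, 0 ≤ a i) (hb : 0 ≤ b) :
    ∑ i ∈ s, (a i - b)⁺ ≤ (∑ i ∈ s, a i - b)⁺ := by
  induction s using Finset.induction_on with
  | empty => simp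
  | insert i s hi ih =>
    rw [sum_insert hi, sum_insert hi]
    have hs : ∀ j ∈ s, 0 ≤ a j := fun j hj => ha j (mem_insert_of_mem hj)
    calc (a i - b)⁺ + ∑ j ∈ s, (a j - b)⁺ ≤ (a i - b)⁺ + (∑ j ∈ s, a j - b)⁺ := by
          gcongr; exact ih hs
      _ ≤ (a i + ∑ j ∈ s, a j - b)⁺ :=
          posPart_sub_add_posPart_sub_le (ha i (mem_insert_self i s)) (sum_nonneg hs) hb

lemma sum_posPart_sub_comp_le {A B : Type*} [Fintype A] [Fintype B] [DecidableEq B]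
    (f : A → B)
    {a : A → ℝ} {b : B → ℝ} (ha : ∀ x, 0 ≤ a x) (hb : ∀ y, 0 ≤ b y) :
    ∑ x, (a x - b (f x))⁺ ≤ ∑ y, (∑ x ∈ univ.filter (f · = y), a x - b y)⁺ := by
  rw [← sum_fiberwise univ f]
  refine sum_le_sum fun y _ => ?_
  calc ∑ x ∈ univ.filter (f · = y), (a x - b (f x))⁺
      = ∑ x ∈ univ.filter (f · = y), (a x - b y)⁺ :=
        sum_congr rfl fun x hx => by rw [(mem_filter.1 hx).2]
    _ ≤ _ := sum_posPart_sub_le _ (fun x _ => ha x) (hb y)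

lemma sum_apply_eq_of_support_fiber {ι α R : Type*} [Fintype ι] [AddCommMonoid R]
    {p : ι → α → R} {π : α → ι} (h : ∀ i x, p i x ≠ 0 → π x = i) (x : α) :
    ∑ i, p i x = p (π x) x :=
  sum_eq_single _ (fun i _ hi => not_imp_comm.1 (h i x) (Ne.symm hi)) (by simp)

lemma sum_fiber_mul_eq_of_support_fiber {ι α R : Type*} [Fintype α] [DecidableEq ι]
    [NonUnitalNonAssocSemiring R] {p : ι → α → R} {π : α → ι}
    (h : ∀ i x, p i x ≠ 0 → π x = i) (i : ι) (g : α → R) :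
    ∑ x ∈ univ.filter (π · = i), p (π x) x * g x = ∑ x, p i x * g x := by
  rw [sum_filter]
  refine sum_congr rfl fun x _ => ?_
  split_ifs with hx
  · rw [hx]
  · rw [not_imp_comm.1 (h i x) hx, zero_mul]

theorem stmt4_general {X Z : Type*} [Fintype X] [Fintype Z]
    (C : Finset X) (N : ℕ) (hN : C.card = N)
    (Wch : X → Z → ℝ) (hW : ∀ x, IsPMF (Wch x))
    (M : ℕ)
    (π : X → Fin M)
    (enc : Fin M → X → ℝ) (henc : ∀ m, IsPMF (enc m))
    (hsupp : ∀ m x, enc m x ≠ 0 → x ∈ C ∧ π x = m)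
    (PWZ : Fin M × Z → ℝ)
    (hPWZ : ∀ p, PWZ p = ((M : ℝ))⁻¹ * ∑ x, enc p.1 x * Wch x p.2)
    (PXZ : X × Z → ℝ)
    (hPXZ : ∀ p, PXZ p = (((M : ℝ))⁻¹ * ∑ m, enc m p.1) * Wch p.1 p.2)
    (Punif : X → ℝ) (hPunif : ∀ x, Punif x = if x ∈ C then ((N : ℝ))⁻¹ else 0) :
    ∀ QZ : Z → ℝ, IsPMF QZ →
      Egam ((N : ℝ) / (M : ℝ)) PXZ (fun p : X × Z => Punif p.1 * QZ p.2)
        ≤ dTV PWZ (fun p : Fin M × Z => ((M : ℝ))⁻¹ * QZ p.2) := by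
  intro QZ hQZ
  have hπ : ∀ m x, enc m x ≠ 0 → π x = m := fun m x h => (hsupp m x h).2
  have hPXZ_eq : ∀ x z, PXZ (x, z) = (M : ℝ)⁻¹ * (enc (π x) x * Wch x z) := fun x z => by
    rw [hPXZ, sum_apply_eq_of_support_fiber hπ]
    ring
  have hterm : ∀ x z, (PXZ (x, z) - N / M * (Punif x * QZ z))⁺
      ≤ ((M : ℝ)⁻¹ * (enc (π x) x * Wch x z) - (M : ℝ)⁻¹ * QZ z)⁺ := fun x z => by
    by_cases hx : x ∈ C
    · have hN0 : (N : ℝ) ≠ 0 := by rw [← hN]; exact_mod_cast (card_pos.2 ⟨x, hx⟩).ne'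
      rw [hPXZ_eq, hPunif, if_pos hx]
      field_simp; rfl
    · have : enc (π x) x = 0 := not_imp_comm.1 (hsupp _ x) fun h => hx h.1
      simp [hPXZ_eq, hPunif, hx, this]
  have hfiber : ∀ m z,
      ∑ x ∈ univ.filter (π · = m), (M : ℝ)⁻¹ * (enc (π x) x * Wch x z) = PWZ (m, z) :=
    fun m z => by rw [← mul_sum, sum_fiber_mul_eq_of_support_fiber hπ, hPWZ]
  have hmass : ∑ p, PWZ p = ∑ p : Fin M × Z, (M : ℝ)⁻¹ * QZ p.2 := by
    simp only [Fintype.sum_prod_type, hPWZ, ← mul_sum, ((henc _).bind hW).2, hQZ.2]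
  rw [Egam_eq_sum_posPart, dTV_eq_sum_posPart hmass, Fintype.sum_prod_type_right,
    Fintype.sum_prod_type_right]
  have hM_inv : 0 ≤ (M : ℝ)⁻¹ := inv_nonneg.2 M.cast_nonneg
  refine sum_le_sum fun z _ => ?_
  calc ∑ x, (PXZ (x, z) - N / M * (Punif x * QZ z))⁺
      ≤ ∑ x, ((M : ℝ)⁻¹ * (enc (π x) x * Wch x z) - (M : ℝ)⁻¹ * QZ z)⁺ :=
        sum_le_sum fun x _ => hterm x z
    _ ≤ ∑ m, (∑ x ∈ univ.filter (π · = m), (M : ℝ)⁻¹ * (enc (π x) x * Wch x z)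
          - (M : ℝ)⁻¹ * QZ z)⁺ :=
        sum_posPart_sub_comp_le π
          (fun x => mul_nonneg hM_inv (mul_nonneg ((henc (π x)).1 x) ((hW x).1 z)))
          (fun _ => mul_nonneg hM_inv (hQZ.1 z))
    _ = ∑ m, (PWZ (m, z) - (M : ℝ)⁻¹ * QZ z)⁺ := by simp only [hfiber]

/-- Converse bound for privacy amplification (Lemma 2): for every partition code
with codebook `C` of size `N` partitioned into `M` message sets,
`d(P_{WZ}, P_W Q_Z) ≥ E_{N/M}(P_{XZ}, P_X^unif Q_Z)` for every PMF `Q_Z`. -/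
theorem stmt4 {X Z : Type*} [Fintype X] [Fintype Z] [Nonempty X] [Nonempty Z]
    (C : Finset X) (N : ℕ) (hN : C.card = N)
    (Wch : X → Z → ℝ) (hW : ∀ x, IsPMF (Wch x))
    (M : ℕ) (hM : 0 < M)
    (π : X → Fin M) (hsurj : ∀ m : Fin M, ∃ x ∈ C, π x = m)
    (enc : Fin M → X → ℝ) (henc : ∀ m, IsPMF (enc m))
    (hsupp : ∀ m x, enc m x ≠ 0 → x ∈ C ∧ π x = m)
    (PWZ : Fin M × Z → ℝ)
    (hPWZ : ∀ p, PWZ p = ((M : ℝ))⁻¹ * ∑ x, enc p.1 x * Wch x p.2)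
    (PXZ : X × Z → ℝ)
    (hPXZ : ∀ p, PXZ p = (((M : ℝ))⁻¹ * ∑ m, enc m p.1) * Wch p.1 p.2)
    (Punif : X → ℝ) (hPunif : ∀ x, Punif x = if x ∈ C then ((N : ℝ))⁻¹ else 0) :
    ∀ QZ : Z → ℝ, IsPMF QZ →
      Egam ((N : ℝ) / (M : ℝ)) PXZ (fun p : X × Z => Punif p.1 * QZ p.2)
        ≤ dTV PWZ (fun p : Fin M × Z => ((M : ℝ))⁻¹ * QZ p.2) :=
  stmt4_general C N hN Wch hW M π enc henc hsupp PWZ hPWZ PXZ hPXZ Punif hPunif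
end
end

section
/- Let X and Y be finite nonempty sets, let C = {x₁,…,x_N} ⊆ X be a set of N distinct elements, let P_{Y|X} be a channel from X to Y, let P^unif_X be the uniform distribution on C, and let P_{Y|C}(y) := (1/N)·Σ_{i=1}^N P_{Y|X}(y|x_i). Then for every PMF Q_Y on Y: d(P_{Y|C}, Q_Y) ≥ E_N(P^unif_X × P_{Y|X}, P^unif_X × Q_Y). -/
open scoped Classical
open Finset

noncomputable section

lemma posPart_sub_add_posPart_sub_le_s5 {a b q : ℝ} (ha : 0 ≤ a) (hb : 0 ≤ b) (hq : 0 ≤ q) :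
    (a - q)⁺ + (b - q)⁺ ≤ (a + b - q)⁺ := by
  simp only [posPart_eq_ite, sub_nonneg]
  split_ifs <;> linarith

lemma sum_posPart_sub_le_posPart_sum_sub {ι : Type*} (s : Finset ι) {a : ι → ℝ}
    (ha : ∀ i ∈ s, 0 ≤ a i) {q : ℝ} (hq : 0 ≤ q) :
    ∑ i ∈ s, (a i - q)⁺ ≤ (∑ i ∈ s, a i - q)⁺ := by
  induction s using Finset.induction_on with
  | empty => simp
  | insert i s hi ih =>
    rw [sum_insert hi, sum_insert hi]
    have ha' : ∀ j ∈ s, 0 ≤ a j := fun j hj => ha j (mem_insert_of_mem hj)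
    calc (a i - q)⁺ + ∑ j ∈ s, (a j - q)⁺
        ≤ (a i - q)⁺ + (∑ j ∈ s, a j - q)⁺ := by gcongr; exact ih ha'
      _ ≤ (a i + ∑ j ∈ s, a j - q)⁺ :=
          posPart_sub_add_posPart_sub_le_s5 (ha i (mem_insert_self i s)) (sum_nonneg ha') hq

theorem stmt5_general {X Y : Type*} [Fintype X] [Fintype Y]
    (N : ℕ) (hN : 0 < N) (x : Fin N → X) (hx : Function.Injective x)
    (Wch : X → Y → ℝ) (hW : ∀ a, IsPMF (Wch a))
    (Punif : X → ℝ)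
    (hPunif : ∀ a, Punif a = if a ∈ Finset.univ.image x then ((N : ℝ))⁻¹ else 0)
    (PYC : Y → ℝ) (hPYC : ∀ y, PYC y = ((N : ℝ))⁻¹ * ∑ i, Wch (x i) y) :
    ∀ QY : Y → ℝ, IsPMF QY →
      Egam (N : ℝ) (fun p : X × Y => Punif p.1 * Wch p.1 p.2)
        (fun p : X × Y => Punif p.1 * QY p.2) ≤ dTV PYC QY := by
  intro QY hQ
  have hN' : (N : ℝ) ≠ 0 := Nat.cast_ne_zero.mpr hN.ne'
  have hPYC_sum : ∑ y, PYC y = ∑ y, QY y := by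
    simp only [hPYC, ← mul_sum, sum_comm (γ := Y), (hW _).2, hQ.2, sum_const, card_univ,
      Fintype.card_fin, nsmul_eq_mul, mul_one, inv_mul_cancel₀ hN']
  rw [dTV_eq_sum_posPart hPYC_sum, Egam_eq_sum_posPart, Fintype.sum_prod_type, sum_comm]
  refine sum_le_sum fun y _ => ?_
  have hterm : ∀ a, (Punif a * Wch a y - N * (Punif a * QY y))⁺ =
      if a ∈ univ.image x then ((N : ℝ)⁻¹ * Wch a y - QY y)⁺ else 0 := by
    intro a
    rw [hPunif a]
    split_ifs
    · rw [mul_inv_cancel_left₀ hN']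
    · simp
  calc ∑ a, (Punif a * Wch a y - N * (Punif a * QY y))⁺
      = ∑ i, ((N : ℝ)⁻¹ * Wch (x i) y - QY y)⁺ := by
        rw [Fintype.sum_congr _ _ hterm, Fintype.sum_ite_mem, sum_image hx.injOn]
    _ ≤ (∑ i, (N : ℝ)⁻¹ * Wch (x i) y - QY y)⁺ :=
        sum_posPart_sub_le_posPart_sum_sub _
          (fun i _ => mul_nonneg (by positivity) ((hW _).1 y)) (hQ.1 y)
    _ = (PYC y - QY y)⁺ := by rw [hPYC, mul_sum]

/-- Converse bound for channel resolvability (Corollary 1): for every codebook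
`C = {x₁,…,x_N}` (given by the injective `x : Fin N → X`), every channel `P_{Y|X}`
and every PMF `Q_Y`, `d(P_{Y|C}, Q_Y) ≥ E_N(P_X^unif P_{Y|X}, P_X^unif Q_Y)`. -/
theorem stmt5 {X Y : Type*} [Fintype X] [Fintype Y] [Nonempty X] [Nonempty Y]
    (N : ℕ) (hN : 0 < N) (x : Fin N → X) (hx : Function.Injective x)
    (Wch : X → Y → ℝ) (hW : ∀ a, IsPMF (Wch a))
    (Punif : X → ℝ)
    (hPunif : ∀ a, Punif a = if a ∈ Finset.univ.image x then ((N : ℝ))⁻¹ else 0)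
    (PYC : Y → ℝ) (hPYC : ∀ y, PYC y = ((N : ℝ))⁻¹ * ∑ i, Wch (x i) y) :
    ∀ QY : Y → ℝ, IsPMF QY →
      Egam (N : ℝ) (fun p : X × Y => Punif p.1 * Wch p.1 p.2)
        (fun p : X × Y => Punif p.1 * QY p.2) ≤ dTV PYC QY :=
  stmt5_general N hN x hx Wch hW Punif hPunif PYC hPYC
end
end

section
/- Let P_{YZ|X} be a wiretap channel from finite X to finite Y × Z, and consider any (M,ε,δ) uniform-partition code (C, π, P_{X|W}). Then there exists a PMF P_X on X (namely the uniform distribution on C) such that, with P_Y := P_{Y|X}∘P_X and P_Z := P_{Z|X}∘P_X, for every PMF Q_Y on Y and every real τ with 0 < τ < 1 − δ: M · τ · β_{1−ε}(P_X × P_{Y|X}, P_X × Q_Y) ≤ β_{δ+τ}(P_X × P_{Z|X}, P_X × P_Z). -/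
open scoped Classical
open Finset

noncomputable section

/-! Take `P_X` uniform on `C`, of size `M K`. The decoder `g` is a test of `P_X × P_{Y|X}` against
`P_X × Q_Y` of power `1 - ε` whose `Q`-probability is `∑ y, Q_Y y P_X (g y) = 1 / (M K)`.
Conversely, a test `t` of `P_X × P_{Z|X}` against `P_X × P_Z` of power `δ + τ` collapses to the
message test `s (m, z) = min 1 (∑ x ∈ π⁻¹ m, t (x, z))`: it has power at least `δ + τ` under
`P_{WZ}`, hence at least `τ` under `P_W × P_Z` by the secrecy constraint, and its
`P_W × P_Z`-probability is at most `K` times the `P_X × P_Z`-probability of `t`.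
So `β_{δ+τ} ≥ τ / K = M τ / (M K) ≥ M τ β_{1-ε}`. -/

section HypothesisTesting

variable {A : Type*}

def IsTest (t : A → ℝ) : Prop := ∀ a, 0 ≤ t a ∧ t a ≤ 1

variable [Fintype A]

lemma betaHT_le {α : ℝ} {P Q t : A → ℝ} (hQ : ∀ a, 0 ≤ Q a) (ht : IsTest t)
    (hα : α ≤ ∑ a, P a * t a) : betaHT α P Q ≤ ∑ a, Q a * t a :=
  csInf_le ⟨0, by
    rintro b ⟨t', ht', -, rfl⟩
    exact sum_nonneg fun a _ => mul_nonneg (hQ a) (ht' a).1⟩ ⟨t, ht, hα, rfl⟩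

lemma le_betaHT {α c : ℝ} {P Q : A → ℝ} (hα : α ≤ ∑ a, P a)
    (h : ∀ t, IsTest t → α ≤ ∑ a, P a * t a → c ≤ ∑ a, Q a * t a) : c ≤ betaHT α P Q := by
  refine le_csInf ⟨_, fun _ => 1, fun _ => ⟨zero_le_one, le_rfl⟩, by simpa using hα, rfl⟩ ?_
  rintro b ⟨t, ht, hαt, rfl⟩
  exact h t ht hαt

lemma sum_mul_le_add_dTV {P Q t : A → ℝ} (ht : IsTest t) (hPQ : ∑ a, P a = ∑ a, Q a) :
    ∑ a, P a * t a ≤ ∑ a, Q a * t a + dTV P Q := by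
  -- `(P - Q) t ≤ ((P - Q) + |P - Q|) / 2`, and the `P - Q` part sums to zero
  have hpt : ∀ a, (P a - Q a) * t a ≤ ((P a - Q a) + |P a - Q a|) / 2 := fun a => by
    rcases abs_cases (P a - Q a) with ⟨h, h'⟩ | ⟨h, h'⟩ <;> nlinarith [ht a]
  have hsum := sum_le_sum fun a (_ : a ∈ univ) => hpt a
  simp only [← sum_div, sum_add_distrib, sum_sub_distrib, hPQ, sub_mul] at hsum
  unfold dTV
  linarith

end HypothesisTesting

section PMF

variable {A B : Type*} [Fintype A] [Fintype B]

lemma IsPMF.fst_marginal {P : A × B → ℝ} (hP : IsPMF P) : IsPMF fun a => ∑ b, P (a, b) :=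
  ⟨fun _ => sum_nonneg fun _ _ => hP.1 _, by rw [← Fintype.sum_prod_type, hP.2]⟩

lemma IsPMF.snd_marginal {P : A × B → ℝ} (hP : IsPMF P) : IsPMF fun b => ∑ a, P (a, b) :=
  ⟨fun _ => sum_nonneg fun _ _ => hP.1 _, by rw [← Fintype.sum_prod_type_right, hP.2]⟩

lemma IsPMF.sum_prod_mul {PA : A → ℝ} {V : A → B → ℝ} (hPA : IsPMF PA) (hV : ∀ a, IsPMF (V a)) :
    ∑ p : A × B, PA p.1 * V p.1 p.2 = 1 := by
  simp [Fintype.sum_prod_type, ← mul_sum, (hV _).2, hPA.2]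

lemma IsPMF.mix {PA : A → ℝ} {V : A → B → ℝ} (hPA : IsPMF PA) (hV : ∀ a, IsPMF (V a)) :
    IsPMF fun b => ∑ a, PA a * V a b :=
  ⟨fun b => sum_nonneg fun a _ => mul_nonneg (hPA.1 a) ((hV a).1 b), by
    rw [sum_comm]; simp [← mul_sum, (hV _).2, hPA.2]⟩

end PMF

section Uniform

variable {A : Type*}

def unifOn (C : Finset A) (a : A) : ℝ := if a ∈ C then ((C.card : ℝ))⁻¹ else 0

lemma isPMF_unifOn [Fintype A] {C : Finset A} (hC : C.Nonempty) : IsPMF (unifOn C) := by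
  refine ⟨fun a => by unfold unifOn; split_ifs <;> positivity, ?_⟩
  simp [unifOn, sum_ite_mem, hC.card_ne_zero]

lemma sum_prod_unifOn_mul [Fintype A] {B : Type*} [Fintype B] (C : Finset A) (F : A × B → ℝ) :
    ∑ p : A × B, unifOn C p.1 * F p = ((C.card : ℝ))⁻¹ * ∑ a ∈ C, ∑ b, F (a, b) := by
  simp only [Fintype.sum_prod_type, ← mul_sum]
  simp only [unifOn, ite_mul, zero_mul, sum_ite_mem, univ_inter]
  rw [mul_sum]

lemma sum_mul_unifOn_of_mem {B : Type*} [Fintype B] {C : Finset A} {Q : B → ℝ} (hQ : IsPMF Q)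
    {g : B → A} (hg : ∀ b, g b ∈ C) : ∑ b, Q b * unifOn C (g b) = ((C.card : ℝ))⁻¹ := by
  simp [unifOn, hg, ← sum_mul, hQ.2]

end Uniform

lemma betaHT_le_of_decoder {X Y : Type*} [Fintype X] [Fintype Y] {PX : X → ℝ} {W : X → Y → ℝ}
    {QY : Y → ℝ} {ε : ℝ} (hPX : IsPMF PX) (hW : ∀ x, IsPMF (W x)) (hQY : ∀ y, 0 ≤ QY y)
    (g : Y → X) (herr : ∑ p : X × Y, PX p.1 * W p.1 p.2 * (if g p.2 = p.1 then 0 else 1) ≤ ε) :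
    betaHT (1 - ε) (fun p : X × Y => PX p.1 * W p.1 p.2) (fun p => PX p.1 * QY p.2)
      ≤ ∑ y, QY y * PX (g y) := by
  let t : X × Y → ℝ := fun p => if g p.2 = p.1 then 1 else 0
  have ht : IsTest t := fun p => by simp only [t]; split_ifs <;> norm_num
  have hsplit : ∀ p : X × Y, PX p.1 * W p.1 p.2 * t p
      = PX p.1 * W p.1 p.2 - PX p.1 * W p.1 p.2 * (if g p.2 = p.1 then 0 else 1) := fun p => by
    simp only [t]; split_ifs <;> ring
  have hvalue : ∑ p : X × Y, PX p.1 * QY p.2 * t p = ∑ y, QY y * PX (g y) := by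
    simp [t, Fintype.sum_prod_type_right, mul_comm]
  refine hvalue ▸ betaHT_le (fun p => mul_nonneg (hPX.1 _) (hQY _)) ht ?_
  simp only [hsplit, sum_sub_distrib, hPX.sum_prod_mul hW]
  linarith

section FiberTest

variable {X Z W : Type*} [DecidableEq W]

def fiberTest (C : Finset X) (π : X → W) (t : X × Z → ℝ) (q : W × Z) : ℝ :=
  min 1 (∑ x ∈ C with π x = q.1, t (x, q.2))

variable {C : Finset X} {π : X → W} {t : X × Z → ℝ}

lemma isTest_fiberTest (ht : IsTest t) : IsTest (fiberTest C π t) := fun _ =>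
  ⟨le_min zero_le_one (sum_nonneg fun _ _ => (ht _).1), min_le_left _ _⟩

lemma le_fiberTest (ht : IsTest t) {x : X} (hx : x ∈ C) (z : Z) :
    t (x, z) ≤ fiberTest C π t (π x, z) :=
  le_min (ht _).2 <| single_le_sum (f := fun x' => t (x', z)) (fun _ _ => (ht _).1) <|
    mem_filter.2 ⟨hx, rfl⟩

lemma sum_mul_le_sum_mul_fiberTest [Fintype Z] [Fintype W] {P : X → Z → ℝ}
    (hP : ∀ x z, 0 ≤ P x z) (ht : IsTest t) :
    ∑ x ∈ C, ∑ z, P x z * t (x, z)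
      ≤ ∑ q : W × Z, (∑ x ∈ C with π x = q.1, P x q.2) * fiberTest C π t q :=
  calc ∑ x ∈ C, ∑ z, P x z * t (x, z)
      ≤ ∑ x ∈ C, ∑ z, P x z * fiberTest C π t (π x, z) :=
        sum_le_sum fun x hx => sum_le_sum fun z _ =>
          mul_le_mul_of_nonneg_left (le_fiberTest ht hx z) (hP x z)
    _ = ∑ m, ∑ x ∈ C with π x = m, ∑ z, P x z * fiberTest C π t (m, z) := by
        rw [← sum_fiberwise C π]
        refine sum_congr rfl fun m _ => sum_congr rfl fun x hx => ?_
        rw [(mem_filter.1 hx).2]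
    _ = _ := by
        simp only [Fintype.sum_prod_type, sum_mul]
        exact sum_congr rfl fun m _ => sum_comm

lemma sum_mul_fiberTest_le [Fintype Z] [Fintype W] {R : W × Z → ℝ} (hR : ∀ q, 0 ≤ R q) :
    ∑ q, R q * fiberTest C π t q ≤ ∑ x ∈ C, ∑ z, R (π x, z) * t (x, z) :=
  calc ∑ q, R q * fiberTest C π t q
      ≤ ∑ q : W × Z, R q * ∑ x ∈ C with π x = q.1, t (x, q.2) :=
        sum_le_sum fun q _ => mul_le_mul_of_nonneg_left (min_le_right _ _) (hR q)
    _ = ∑ m, ∑ x ∈ C with π x = m, ∑ z, R (π x, z) * t (x, z) := by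
        simp only [Fintype.sum_prod_type, mul_sum]
        refine sum_congr rfl fun m _ => sum_comm.trans <| sum_congr rfl fun x hx => ?_
        rw [(mem_filter.1 hx).2]
    _ = _ := sum_fiberwise C π _

end FiberTest

lemma le_betaHT_of_dTV_le {X Z W : Type*} [Fintype X] [Fintype Z] [Fintype W] [DecidableEq W]
    {C : Finset X} (hC : C.Nonempty) {π : X → W} {V : X → Z → ℝ} (hV : ∀ x, IsPMF (V x))
    {δ τ : ℝ}
    (hsec : dTV (fun q : W × Z => ((C.card : ℝ))⁻¹ * ∑ x ∈ C with π x = q.1, V x q.2)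
      (fun q => ((Fintype.card W : ℝ))⁻¹ * ∑ x, unifOn C x * V x q.2) ≤ δ)
    (hτ : δ + τ ≤ 1) :
    Fintype.card W * τ / C.card ≤ betaHT (δ + τ) (fun p : X × Z => unifOn C p.1 * V p.1 p.2)
      (fun p => unifOn C p.1 * ∑ x, unifOn C x * V x p.2) := by
  set PZ : Z → ℝ := fun z => ∑ x, unifOn C x * V x z
  have hPX := isPMF_unifOn hC
  have hPZ : IsPMF PZ := hPX.mix hV
  have hN : (0 : ℝ) < C.card := Nat.cast_pos.2 hC.card_pos
  have hW : (0 : ℝ) < Fintype.card W := Nat.cast_pos.2 (Fintype.card_pos_iff.2 ⟨π hC.choose⟩)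
  have hPWZ : ∑ q : W × Z, ((C.card : ℝ))⁻¹ * ∑ x ∈ C with π x = q.1, V x q.2 = 1 := by
    rw [← mul_sum, Fintype.sum_prod_type_right]
    simp only [sum_fiberwise C π fun x => V x _]
    rw [sum_comm]
    simp [(hV _).2, hN.ne']
  have hQWZ : ∑ q : W × Z, ((Fintype.card W : ℝ))⁻¹ * PZ q.2 = 1 := by
    simp [Fintype.sum_prod_type, ← mul_sum, hPZ.2, hW.ne']
  refine le_betaHT (by simpa [hPX.sum_prod_mul hV] using hτ) fun t ht hδτ => ?_
  have key := calc δ + τ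
      ≤ ∑ p : X × Z, unifOn C p.1 * V p.1 p.2 * t p := hδτ
    _ = ∑ x ∈ C, ∑ z, ((C.card : ℝ))⁻¹ * V x z * t (x, z) := by
        simp only [mul_assoc, sum_prod_unifOn_mul, mul_sum]
    _ ≤ ∑ q : W × Z, (∑ x ∈ C with π x = q.1, ((C.card : ℝ))⁻¹ * V x q.2) * fiberTest C π t q :=
        sum_mul_le_sum_mul_fiberTest (fun x z => mul_nonneg (by positivity) ((hV x).1 z)) ht
    _ ≤ ∑ q : W × Z, (Fintype.card W : ℝ)⁻¹ * PZ q.2 * fiberTest C π t q + δ := by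
        simp only [← mul_sum]
        exact (sum_mul_le_add_dTV (isTest_fiberTest ht) (hPWZ.trans hQWZ.symm)).trans
          (by gcongr)
    _ ≤ ∑ x ∈ C, ∑ z, (Fintype.card W : ℝ)⁻¹ * PZ z * t (x, z) + δ := by
        gcongr
        exact sum_mul_fiberTest_le fun q => mul_nonneg (by positivity) (hPZ.1 q.2)
    _ = C.card / Fintype.card W * ∑ p : X × Z, unifOn C p.1 * PZ p.2 * t p + δ := by
        simp only [mul_assoc, sum_prod_unifOn_mul, mul_sum]
        congr 1
        refine sum_congr rfl fun _ _ => sum_congr rfl fun _ _ => by field_simp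
  calc Fintype.card W * τ / C.card
      ≤ Fintype.card W * (C.card / Fintype.card W *
          ∑ p : X × Z, unifOn C p.1 * PZ p.2 * t p) / C.card := by gcongr; linarith
    _ = ∑ p : X × Z, unifOn C p.1 * PZ p.2 * t p := by field_simp

section UniformPartitionCode

variable {X W : Type*} [DecidableEq W] {C : Finset X} {π : X → W}

lemma card_eq_card_mul_of_card_fiber [Fintype W] {K : ℕ} (hfib : ∀ m, #{x ∈ C | π x = m} = K) :
    #C = Fintype.card W * K := by
  rw [card_eq_sum_card_fiberwise fun x _ => mem_univ (π x)]
  simp [hfib]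

variable {M K : ℕ} {enc : W → X → ℝ}

lemma encoder_marginal_eq_unifOn [Fintype W] (hcard : #C = M * K)
    (henc : ∀ m x, enc m x = if x ∈ C ∧ π x = m then ((K : ℝ))⁻¹ else 0) (x : X) :
    ((M : ℝ))⁻¹ * ∑ m, enc m x = unifOn C x := by
  by_cases hx : x ∈ C <;> simp [henc, hx, unifOn, hcard, mul_comm]

lemma encoder_joint_eq [Fintype X] (hcard : #C = M * K)
    (henc : ∀ m x, enc m x = if x ∈ C ∧ π x = m then ((K : ℝ))⁻¹ else 0) (m : W) (f : X → ℝ) :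
    ((M : ℝ))⁻¹ * ∑ x, enc m x * f x = ((C.card : ℝ))⁻¹ * ∑ x ∈ C with π x = m, f x := by
  simp only [henc, ite_mul, zero_mul, ← sum_filter, ← filter_filter, filter_univ_mem, ← mul_sum]
  rw [← mul_assoc, hcard, Nat.cast_mul, mul_inv]

end UniformPartitionCode

theorem stmt7_general {X Y Z : Type*} [Fintype X] [Fintype Y] [Fintype Z]
    (Wch : X → Y × Z → ℝ) (hW : ∀ x, IsPMF (Wch x))
    (M : ℕ) (hM : 0 < M)
    (ε δ : ℝ)
    (C : Finset X)
    (gle : Y → X) (hgle : ∀ y, gle y ∈ C)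
    (π : X → Fin M)
    (K : ℕ) (hK : 0 < K)
    (hfib : ∀ m : Fin M, (C.filter (fun x => π x = m)).card = K)
    (enc : Fin M → X → ℝ)
    (hencunif : ∀ m x, enc m x = if x ∈ C ∧ π x = m then ((K : ℝ))⁻¹ else 0)
    (hrel : ∑ x, ∑ p : Y × Z,
        (((M : ℝ))⁻¹ * ∑ m, enc m x) * Wch x p * (if gle p.1 = x then 0 else 1) ≤ ε)
    (hsec : dTV (fun p : Fin M × Z => ((M : ℝ))⁻¹ * ∑ x, enc p.1 x * ∑ y, Wch x (y, p.2))
              (fun p : Fin M × Z =>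
                ((M : ℝ))⁻¹ * ∑ x, (((M : ℝ))⁻¹ * ∑ m, enc m x) * ∑ y, Wch x (y, p.2)) ≤ δ) :
    ∃ PX : X → ℝ,
      (∀ x, PX x = if x ∈ C then ((C.card : ℝ))⁻¹ else 0) ∧
      ∀ QY : Y → ℝ, IsPMF QY → ∀ τ : ℝ, 0 < τ → τ < 1 - δ →
        (M : ℝ) * τ *
            betaHT (1 - ε) (fun p : X × Y => PX p.1 * ∑ z, Wch p.1 (p.2, z))
              (fun p : X × Y => PX p.1 * QY p.2)
          ≤ betaHT (δ + τ) (fun p : X × Z => PX p.1 * ∑ y, Wch p.1 (y, p.2))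
              (fun p : X × Z => PX p.1 * ∑ x', PX x' * ∑ y, Wch x' (y, p.2)) := by
  have hcard : #C = M * K := by simpa using card_eq_card_mul_of_card_fiber hfib
  have hC : C.Nonempty := card_pos.1 (by rw [hcard]; positivity)
  simp only [encoder_marginal_eq_unifOn hcard hencunif, encoder_joint_eq hcard hencunif]
    at hrel hsec
  refine ⟨unifOn C, fun x => rfl, fun QY hQY τ hτ hτδ => ?_⟩
  have herr : ∑ p : X × Y, unifOn C p.1 * (∑ z, Wch p.1 (p.2, z)) *
      (if gle p.2 = p.1 then 0 else 1) ≤ ε := by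
    refine le_of_eq_of_le ?_ hrel
    simp only [Fintype.sum_prod_type, sum_mul, mul_sum]
  have hβY :=
    betaHT_le_of_decoder (isPMF_unifOn hC) (fun x => (hW x).fst_marginal) hQY.1 gle herr
  rw [sum_mul_unifOn_of_mem hQY hgle] at hβY
  have hβZ := le_betaHT_of_dTV_le hC (fun x => (hW x).snd_marginal) (π := π)
    (by rwa [Fintype.card_fin]) (by linarith : δ + τ ≤ 1)
  rw [Fintype.card_fin] at hβZ
  calc (M : ℝ) * τ * _ ≤ M * τ * ((C.card : ℝ))⁻¹ := by gcongr
    _ = M * τ / C.card := (div_eq_mul_inv _ _).symm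
    _ ≤ _ := hβZ

/-- Converse bound for uniform-partition codes (Theorem 4, Eq. (26)): for every
`(M,ε,δ)` uniform-partition code there exists a PMF `P_X` (the uniform distribution
on `C`) with `M τ β_{1-ε}(P_X P_{Y|X}, P_X Q_Y) ≤ β_{δ+τ}(P_X P_{Z|X}, P_X P_Z)`
for all PMFs `Q_Y` and `0 < τ < 1 - δ`. -/
theorem stmt7 {X Y Z : Type*} [Fintype X] [Fintype Y] [Fintype Z]
    [Nonempty X] [Nonempty Y] [Nonempty Z]
    (Wch : X → Y × Z → ℝ) (hW : ∀ x, IsPMF (Wch x))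
    (M : ℕ) (hM : 0 < M)
    (ε δ : ℝ) (hε0 : 0 ≤ ε) (hε1 : ε ≤ 1) (hδ0 : 0 ≤ δ) (hδ1 : δ ≤ 1)
    (C : Finset X)
    (gle : Y → X) (hgle : ∀ y, gle y ∈ C)
    (π : X → Fin M) (hπ : ∀ m : Fin M, ∃ x ∈ C, π x = m)
    (K : ℕ) (hK : 0 < K)
    (hfib : ∀ m : Fin M, (C.filter (fun x => π x = m)).card = K)
    (enc : Fin M → X → ℝ)
    (hencunif : ∀ m x, enc m x = if x ∈ C ∧ π x = m then ((K : ℝ))⁻¹ else 0)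
    (hrel : ∑ x, ∑ p : Y × Z,
        (((M : ℝ))⁻¹ * ∑ m, enc m x) * Wch x p * (if gle p.1 = x then 0 else 1) ≤ ε)
    (hsec : dTV (fun p : Fin M × Z => ((M : ℝ))⁻¹ * ∑ x, enc p.1 x * ∑ y, Wch x (y, p.2))
              (fun p : Fin M × Z =>
                ((M : ℝ))⁻¹ * ∑ x, (((M : ℝ))⁻¹ * ∑ m, enc m x) * ∑ y, Wch x (y, p.2)) ≤ δ) :
    ∃ PX : X → ℝ,
      (∀ x, PX x = if x ∈ C then ((C.card : ℝ))⁻¹ else 0) ∧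
      ∀ QY : Y → ℝ, IsPMF QY → ∀ τ : ℝ, 0 < τ → τ < 1 - δ →
        (M : ℝ) * τ *
            betaHT (1 - ε) (fun p : X × Y => PX p.1 * ∑ z, Wch p.1 (p.2, z))
              (fun p : X × Y => PX p.1 * QY p.2)
          ≤ betaHT (δ + τ) (fun p : X × Z => PX p.1 * ∑ y, Wch p.1 (y, p.2))
              (fun p : X × Z => PX p.1 * ∑ x', PX x' * ∑ y, Wch x' (y, p.2)) :=
  stmt7_general Wch hW M hM ε δ C gle hgle π K hK hfib enc hencunif hrel hsec
end
end

section
/- Let X and Z be finite nonempty sets, C ⊆ X, and P_{Z|X} a channel from X to Z. Let π : C → {1,…,M} be a surjection and, for each m ∈ {1,…,M}, let P_{X|W=m} be a PMF on X supported on π⁻¹(m). Let W be uniform on {1,…,M}, with induced joint P_{WXZ}(m,x,z) := (1/M)·P_{X|W}(x|m)·P_{Z|X}(z|x) and marginals P_{WZ}, P_W, P_{XZ}. Let ℒ : Z → 2^C be a list decoder, L := max_{z∈Z} |ℒ(z)|, and ε_ld := Σ_{x,z} P_{XZ}(x,z)·1{x ∉ ℒ(z)}. Then for every PMF Q_Z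 on Z: d(P_{WZ}, P_W × Q_Z) ≥ 1 − ε_ld − L/M. -/
open scoped Classical
open Finset

noncomputable section

/-!
Let `S` be the set of pairs `(m, z)` such that the list `ℒ z` contains a codeword of
message `m`. Under `P_{WZ}` the complement of `S` has mass at most `ε_ld`, since `(m, z) ∉ S`
forces every `x` encoding `m` to lie outside `ℒ z`. Under `P_W × Q_Z` the set `S` has mass at
most `L/M`, since each slice `{m | (m, z) ∈ S} = π(ℒ z)` has at most `L` elements and `W` is
uniform. The difference of the masses of one set under two PMFs is a lower bound for their
total variation distance.
-/

theorem IsPMF.uniform {M : ℕ} (hM : 0 < M) : IsPMF (fun _ : Fin M => (M : ℝ)⁻¹) := by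
  refine ⟨fun _ => by positivity, ?_⟩
  simp [Finset.card_univ, Fintype.card_fin, hM.ne']

section Channels

variable {A B : Type*} [Fintype A] [Fintype B] {P : A → ℝ} {K : A → B → ℝ}

theorem IsPMF.prod_channel (hP : IsPMF P) (hK : ∀ a, IsPMF (K a)) :
    IsPMF (fun p : A × B => P p.1 * K p.1 p.2) := by
  refine ⟨fun p => mul_nonneg (hP.1 _) ((hK _).1 _), ?_⟩
  simp only [Fintype.sum_prod_type, ← Finset.mul_sum, (hK _).2, mul_one, hP.2]

theorem IsPMF.comp_channel (hP : IsPMF P) (hK : ∀ a, IsPMF (K a)) :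
    IsPMF (fun b => ∑ a, P a * K a b) := by
  refine ⟨fun b => Finset.sum_nonneg fun a _ => mul_nonneg (hP.1 a) ((hK a).1 b), ?_⟩
  rw [Finset.sum_comm]
  simp only [← Finset.mul_sum, (hK _).2, mul_one, hP.2]

end Channels

theorem sum_sub_sum_le_dTV {A : Type*} [Fintype A] {P Q : A → ℝ} (h : ∑ a, P a = ∑ a, Q a)
    (S : Finset A) : ∑ a ∈ S, P a - ∑ a ∈ S, Q a ≤ dTV P Q := by
  have hsplit := Finset.sum_add_sum_compl S (fun a => P a - Q a)
  have hS : ∑ a ∈ S, (P a - Q a) ≤ ∑ a ∈ S, |P a - Q a| :=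
    Finset.sum_le_sum fun a _ => le_abs_self _
  have hSc : ∑ a ∈ Sᶜ, -(P a - Q a) ≤ ∑ a ∈ Sᶜ, |P a - Q a| :=
    Finset.sum_le_sum fun a _ => neg_le_abs _
  have habs := Finset.sum_add_sum_compl S (fun a => |P a - Q a|)
  simp only [Finset.sum_sub_distrib, Finset.sum_neg_distrib, h, sub_self] at hsplit hS hSc
  rw [dTV]
  linarith

theorem sum_filter_mem_mul_le {A Z : Type*} [Fintype A] [DecidableEq A] [Fintype Z]
    {Q : Z → ℝ} (hQ : IsPMF Q) {c : ℝ} (hc : 0 ≤ c) (T : Z → Finset A) {L : ℕ}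
    (hT : ∀ z, (T z).card ≤ L) :
    ∑ p ∈ univ.filter (fun p : A × Z => p.1 ∈ T p.2), c * Q p.2 ≤ L * c := by
  calc ∑ p ∈ univ.filter (fun p : A × Z => p.1 ∈ T p.2), c * Q p.2
      = ∑ z, ((T z).card : ℝ) * (c * Q z) := by
        rw [Finset.sum_filter, Fintype.sum_prod_type, Finset.sum_comm]
        refine Finset.sum_congr rfl fun z _ => ?_
        simp
    _ ≤ ∑ z, (L : ℝ) * (c * Q z) :=
        Finset.sum_le_sum fun z _ =>
          mul_le_mul_of_nonneg_right (by exact_mod_cast hT z) (mul_nonneg hc (hQ.1 z))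
    _ = L * c := by rw [← Finset.mul_sum, ← Finset.mul_sum, hQ.2, mul_one]

theorem sum_filter_not_mem_image_le {A X Z : Type*} [Fintype A] [DecidableEq A] [Fintype X]
    [Fintype Z] {c : ℝ} (hc : 0 ≤ c) {enc : A → X → ℝ} (henc : ∀ m x, 0 ≤ enc m x)
    {W : X → Z → ℝ} (hW : ∀ x z, 0 ≤ W x z) {π : X → A}
    (hsupp : ∀ m x, enc m x ≠ 0 → π x = m) (ℒ : Z → Finset X) :
    ∑ p ∈ univ.filter (fun p : A × Z => p.1 ∉ (ℒ p.2).image π),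
        c * ∑ x, enc p.1 x * W x p.2
      ≤ ∑ x, ∑ z, (c * ∑ m, enc m x) * W x z * (if x ∈ ℒ z then 0 else 1) := by
  have hmissed : ∀ p ∈ univ.filter (fun p : A × Z => p.1 ∉ (ℒ p.2).image π),
      c * ∑ x, enc p.1 x * W x p.2
        = c * ∑ x, enc p.1 x * W x p.2 * (if x ∈ ℒ p.2 then 0 else 1) := by
    intro p hp
    congr 1
    refine Finset.sum_congr rfl fun x _ => ?_
    by_cases hx : x ∈ ℒ p.2
    · have : enc p.1 x = 0 := by
        by_contra hne
        exact (Finset.mem_filter.1 hp).2 (Finset.mem_image.2 ⟨x, hx, hsupp _ _ hne⟩)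
      simp [this]
    · simp [hx]
  rw [Finset.sum_congr rfl hmissed]
  refine (sum_le_sum_of_subset_of_nonneg (filter_subset _ _) fun p _ _ => ?_).trans (le_of_eq ?_)
  · exact mul_nonneg hc (Finset.sum_nonneg fun x _ =>
      mul_nonneg (mul_nonneg (henc _ _) (hW _ _)) (by split_ifs <;> norm_num))
  · simp only [Finset.mul_sum]
    rw [Finset.sum_comm]
    refine Finset.sum_congr rfl fun x _ => ?_
    rw [Fintype.sum_prod_type, Finset.sum_comm]
    simp only [Finset.sum_mul]
    exact Finset.sum_congr rfl fun z _ => Finset.sum_congr rfl fun m _ => by ring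

theorem stmt8_general {X Z : Type*} [Fintype X] [Fintype Z]
    (C : Finset X)
    (Wch : X → Z → ℝ) (hW : ∀ x, IsPMF (Wch x))
    (M : ℕ) (hM : 0 < M)
    (π : X → Fin M)
    (enc : Fin M → X → ℝ) (henc : ∀ m, IsPMF (enc m))
    (hsupp : ∀ m x, enc m x ≠ 0 → x ∈ C ∧ π x = m)
    (PWZ : Fin M × Z → ℝ)
    (hPWZ : ∀ p, PWZ p = ((M : ℝ))⁻¹ * ∑ x, enc p.1 x * Wch x p.2)
    (PXZ : X × Z → ℝ)
    (hPXZ : ∀ p, PXZ p = (((M : ℝ))⁻¹ * ∑ m, enc m p.1) * Wch p.1 p.2)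
    (ℒ : Z → Finset X)
    (L : ℕ) (hL : L = Finset.univ.sup (fun z => (ℒ z).card))
    (εld : ℝ)
    (hεld : εld = ∑ x, ∑ z, PXZ (x, z) * (if x ∈ ℒ z then 0 else 1)) :
    ∀ QZ : Z → ℝ, IsPMF QZ →
      1 - εld - (L : ℝ) / (M : ℝ)
        ≤ dTV PWZ (fun p : Fin M × Z => ((M : ℝ))⁻¹ * QZ p.2) := by
  intro QZ hQZ
  obtain rfl : PWZ = _ := funext hPWZ
  simp only [hPXZ] at hεld
  have hMinv : 0 ≤ (M : ℝ)⁻¹ := by positivity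
  have hcard : ∀ z, ((ℒ z).image π).card ≤ L := fun z =>
    card_image_le.trans (hL ▸ le_sup (f := fun z => (ℒ z).card) (mem_univ z))
  set S := univ.filter fun p : Fin M × Z => p.1 ∈ (ℒ p.2).image π
  have hP := (IsPMF.uniform hM).prod_channel fun m => (henc m).comp_channel hW
  have hQ := (IsPMF.uniform hM).prod_channel fun _ => hQZ
  have hPS := sum_filter_add_sum_filter_not univ (fun p : Fin M × Z => p.1 ∈ (ℒ p.2).image π)
    fun p => (M : ℝ)⁻¹ * ∑ x, enc p.1 x * Wch x p.2
  have herr := sum_filter_not_mem_image_le hMinv (fun m => (henc m).1) (fun x => (hW x).1)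
    (fun m x h => (hsupp m x h).2) ℒ
  have hQS := sum_filter_mem_mul_le hQZ hMinv (fun z => (ℒ z).image π) hcard
  have hTV := sum_sub_sum_le_dTV (hP.2.trans hQ.2.symm) S
  rw [hP.2] at hPS
  rw [div_eq_mul_inv]
  linarith

/-- List-decoding converse for partition codes (Theorem 5): for every list decoder
`ℒ` at the eavesdropper with maximum list size `L` and error probability `ε_ld`,
`d(P_{WZ}, P_W Q_Z) ≥ 1 - ε_ld - L/M` for every PMF `Q_Z`. -/
theorem stmt8 {X Z : Type*} [Fintype X] [Fintype Z] [Nonempty X] [Nonempty Z]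
    (C : Finset X)
    (Wch : X → Z → ℝ) (hW : ∀ x, IsPMF (Wch x))
    (M : ℕ) (hM : 0 < M)
    (π : X → Fin M) (hsurj : ∀ m : Fin M, ∃ x ∈ C, π x = m)
    (enc : Fin M → X → ℝ) (henc : ∀ m, IsPMF (enc m))
    (hsupp : ∀ m x, enc m x ≠ 0 → x ∈ C ∧ π x = m)
    (PWZ : Fin M × Z → ℝ)
    (hPWZ : ∀ p, PWZ p = ((M : ℝ))⁻¹ * ∑ x, enc p.1 x * Wch x p.2)
    (PXZ : X × Z → ℝ)
    (hPXZ : ∀ p, PXZ p = (((M : ℝ))⁻¹ * ∑ m, enc m p.1) * Wch p.1 p.2)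
    (ℒ : Z → Finset X) (hℒ : ∀ z, ℒ z ⊆ C)
    (L : ℕ) (hL : L = Finset.univ.sup (fun z => (ℒ z).card))
    (εld : ℝ)
    (hεld : εld = ∑ x, ∑ z, PXZ (x, z) * (if x ∈ ℒ z then 0 else 1)) :
    ∀ QZ : Z → ℝ, IsPMF QZ →
      1 - εld - (L : ℝ) / (M : ℝ)
        ≤ dTV PWZ (fun p : Fin M × Z => ((M : ℝ))⁻¹ * QZ p.2) :=
  stmt8_general C Wch hW M hM π enc henc hsupp PWZ hPWZ PXZ hPXZ ℒ L hL εld hεld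
end
end

section
/- Let X and Z be finite nonempty sets, C ⊆ X with |C| = N, and P_{Z|X} a channel from X to Z. Let π : C → {1,…,M} be a surjection and, for each m ∈ {1,…,M}, let P_{X|W=m} be a PMF on X supported on π⁻¹(m). Let W be uniform on {1,…,M}, with induced joint P_{WXZ}(m,x,z) := (1/M)·P_{X|W}(x|m)·P_{Z|X}(z|x) and marginals P_{WZ}, P_W, P_{XZ}. Let Q_X be the uniform distribution on C and Q_Z any PMF on Z. Then for every real t > 0, with E_t := {(x,z) ∈ C × Z : P_{XZ}(x,z) ≥ t·Q_X(x)·Q_Z(z)}: d(P_{WZ}, P_W × Q_Z) ≥ P_{XZ}(E_t) − (N/M)·(Q_X × Q_Z)(E_t). -/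
open scoped Classical
open Finset

noncomputable section

/-!
Since `Q_X` is uniform on `C`, the left-hand side is `∑_{(x,z) ∈ E_t} (P_{XZ}(x,z) - Q_Z(z)/M)`.
Group its terms by `(π x, z)`. As `P_{X|W=m}` lives on `π⁻¹(m)`, the `P_{XZ}`-mass of a fibre is
at most `P_{WZ}(m,z)`, while a nonempty fibre subtracts `Q_Z(z)/M = (P_W × Q_Z)(m,z)` at least
once; so each fibre contributes at most `(P_{WZ} - P_W × Q_Z)⁺(m,z)`. For two distributions of
equal total mass, the sum of the positive parts of their difference is their total variation
distance.
-/

theorem sum_posPart_sub_eq_dTV {A : Type*} [Fintype A] {P Q : A → ℝ}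
    (h : ∑ a, P a = ∑ a, Q a) : ∑ a, (P a - Q a)⁺ = dTV P Q := by
  have hpos : ∀ r : ℝ, r⁺ = (1 / 2) * (|r| + r) := fun r => by
    linarith [posPart_add_negPart r, posPart_sub_negPart r]
  simp only [hpos, ← mul_sum, sum_add_distrib, sum_sub_distrib, h, sub_self, add_zero, dTV]

theorem sum_sub_comp_le_sum_posPart {A B : Type*} [Fintype A] [Fintype B] [DecidableEq B]
    (f : A → B) {P : A → ℝ} {P' Q : B → ℝ} (hP : ∀ a, 0 ≤ P a) (hQ : ∀ b, 0 ≤ Q b)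
    (hP' : ∀ b, ∑ a with f a = b, P a ≤ P' b) (E : Finset A) :
    ∑ a ∈ E, (P a - Q (f a)) ≤ ∑ b, (P' b - Q b)⁺ := by
  rw [← sum_fiberwise E f]
  refine sum_le_sum fun b _ => ?_
  rcases (E.filter (f · = b)).eq_empty_or_nonempty with hempty | hne
  · simp [hempty]
  have hmass : ∑ a ∈ E with f a = b, P a ≤ P' b :=
    (sum_le_sum_of_subset_of_nonneg (filter_subset_filter _ (subset_univ E))
      fun a _ _ => hP a).trans (hP' b)
  have hcount : Q b ≤ #(E.filter (f · = b)) * Q b :=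
    le_mul_of_one_le_left (hQ b) (by exact_mod_cast hne.card_pos)
  have hconst : ∑ a ∈ E with f a = b, Q (f a) = #(E.filter (f · = b)) * Q b := by
    rw [sum_congr rfl fun a ha => congrArg Q (mem_filter.1 ha).2, sum_const, nsmul_eq_mul]
  calc ∑ a ∈ E with f a = b, (P a - Q (f a))
      = ∑ a ∈ E with f a = b, P a - #(E.filter (f · = b)) * Q b := by
        rw [sum_sub_distrib, hconst]
    _ ≤ P' b - Q b := sub_le_sub hmass hcount
    _ ≤ (P' b - Q b)⁺ := le_posPart _

theorem sum_sum_mul_channel_eq_one {X Z : Type*} [Fintype X] [Fintype Z] {P : X → ℝ}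
    {W : X → Z → ℝ} (hP : ∑ x, P x = 1) (hW : ∀ x, ∑ z, W x z = 1) :
    ∑ z, ∑ x, P x * W x z = 1 := by
  rw [sum_comm]
  simp only [← mul_sum, hW, mul_one, hP]

theorem sum_fiber_mixture_eq {X Z W : Type*} [Fintype X] [Fintype Z] [Fintype W]
    [DecidableEq Z] [DecidableEq W]
    (π : X → W) (enc : W → X → ℝ) (ch : X → Z → ℝ) (c : ℝ)
    (hsupp : ∀ w x, enc w x ≠ 0 → π x = w) (w : W) (z : Z) :
    ∑ p : X × Z with (π p.1, p.2) = (w, z), (c * ∑ w', enc w' p.1) * ch p.1 p.2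
      = c * ∑ x, enc w x * ch x z := by
  have hcollapse : ∀ x, ∑ w', enc w' x = enc (π x) x := fun x =>
    sum_eq_single _ (fun w' _ hne => by_contra fun h => hne (hsupp w' x h).symm) (by simp)
  rw [sum_filter, Fintype.sum_prod_type, mul_sum]
  refine sum_congr rfl fun x _ => ?_
  by_cases hx : π x = w
  · simp [hx, hcollapse, mul_assoc]
  · have henc : enc w x = 0 := by_contra fun h => hx (hsupp w x h)
    simp [hx, henc]

theorem stmt10_general {X Z : Type*} [Fintype X] [Fintype Z]
    (C : Finset X) (N : ℕ) (hN : C.card = N)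
    (Wch : X → Z → ℝ) (hW : ∀ x, IsPMF (Wch x))
    (M : ℕ)
    (π : X → Fin M)
    (enc : Fin M → X → ℝ) (henc : ∀ m, IsPMF (enc m))
    (hsupp : ∀ m x, enc m x ≠ 0 → x ∈ C ∧ π x = m)
    (PWZ : Fin M × Z → ℝ)
    (hPWZ : ∀ p, PWZ p = ((M : ℝ))⁻¹ * ∑ x, enc p.1 x * Wch x p.2)
    (PXZ : X × Z → ℝ)
    (hPXZ : ∀ p, PXZ p = (((M : ℝ))⁻¹ * ∑ m, enc m p.1) * Wch p.1 p.2)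
    (QX : X → ℝ) (hQX : ∀ x, QX x = if x ∈ C then ((N : ℝ))⁻¹ else 0)
    (QZ : Z → ℝ) (hQZ : IsPMF QZ) :
    ∀ t : ℝ, 0 < t →
      (∑ p ∈ Finset.univ.filter
          (fun p : X × Z => p.1 ∈ C ∧ t * (QX p.1 * QZ p.2) ≤ PXZ p), PXZ p)
        - ((N : ℝ) / (M : ℝ)) *
          (∑ p ∈ Finset.univ.filter
            (fun p : X × Z => p.1 ∈ C ∧ t * (QX p.1 * QZ p.2) ≤ PXZ p), QX p.1 * QZ p.2)
        ≤ dTV PWZ (fun p : Fin M × Z => ((M : ℝ))⁻¹ * QZ p.2) := by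
  intro t _
  set E := univ.filter fun p : X × Z => p.1 ∈ C ∧ t * (QX p.1 * QZ p.2) ≤ PXZ p
  have hLHS : (∑ p ∈ E, PXZ p) - (N / M : ℝ) * ∑ p ∈ E, QX p.1 * QZ p.2
      = ∑ p ∈ E, (PXZ p - (M : ℝ)⁻¹ * QZ p.2) := by
    rw [mul_sum, ← sum_sub_distrib]
    refine sum_congr rfl fun p hp => ?_
    have hpC : p.1 ∈ C := (mem_filter.1 hp).2.1
    have hN0 : (N : ℝ) ≠ 0 := by rw [← hN]; exact_mod_cast (card_pos.2 ⟨_, hpC⟩).ne'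
    rw [hQX, if_pos hpC]
    field_simp
  have hmarginal : ∀ q, ∑ p with (π p.1, p.2) = q, PXZ p = PWZ q := fun ⟨m, z⟩ => by
    simp only [hPXZ, hPWZ]
    exact sum_fiber_mixture_eq π enc Wch _ (fun m x h => (hsupp m x h).2) m z
  have hmass : ∑ q, PWZ q = ∑ q : Fin M × Z, (M : ℝ)⁻¹ * QZ q.2 := by
    simp only [hPWZ, Fintype.sum_prod_type, ← mul_sum,
      sum_sum_mul_channel_eq_one (henc _).2 fun x => (hW x).2, hQZ.2]
  have hPXZ_nonneg : ∀ p, 0 ≤ PXZ p := fun p => by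
    rw [hPXZ]
    have := sum_nonneg fun m (_ : m ∈ univ) => (henc m).1 p.1
    have := (hW p.1).1 p.2
    positivity
  rw [hLHS, ← sum_posPart_sub_eq_dTV hmass]
  exact sum_sub_comp_le_sum_posPart (fun p : X × Z => (π p.1, p.2)) hPXZ_nonneg
    (fun q => mul_nonneg (by positivity) (hQZ.1 q.2)) (fun q => (hmarginal q).le) E

/-- Threshold-event converse for partition codes (Eq. (74) in the proof of
Lemma 2): for every `t > 0`, with `E_t = {(x,z) ∈ C × Z : P_{XZ}(x,z) ≥ t Q_X(x) Q_Z(z)}`,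
`d(P_{WZ}, P_W Q_Z) ≥ P_{XZ}(E_t) − (N/M) (Q_X × Q_Z)(E_t)`. -/
theorem stmt10 {X Z : Type*} [Fintype X] [Fintype Z] [Nonempty X] [Nonempty Z]
    (C : Finset X) (N : ℕ) (hN : C.card = N)
    (Wch : X → Z → ℝ) (hW : ∀ x, IsPMF (Wch x))
    (M : ℕ) (hM : 0 < M)
    (π : X → Fin M) (hsurj : ∀ m : Fin M, ∃ x ∈ C, π x = m)
    (enc : Fin M → X → ℝ) (henc : ∀ m, IsPMF (enc m))
    (hsupp : ∀ m x, enc m x ≠ 0 → x ∈ C ∧ π x = m)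
    (PWZ : Fin M × Z → ℝ)
    (hPWZ : ∀ p, PWZ p = ((M : ℝ))⁻¹ * ∑ x, enc p.1 x * Wch x p.2)
    (PXZ : X × Z → ℝ)
    (hPXZ : ∀ p, PXZ p = (((M : ℝ))⁻¹ * ∑ m, enc m p.1) * Wch p.1 p.2)
    (QX : X → ℝ) (hQX : ∀ x, QX x = if x ∈ C then ((N : ℝ))⁻¹ else 0)
    (QZ : Z → ℝ) (hQZ : IsPMF QZ) :
    ∀ t : ℝ, 0 < t →
      (∑ p ∈ Finset.univ.filter
          (fun p : X × Z => p.1 ∈ C ∧ t * (QX p.1 * QZ p.2) ≤ PXZ p), PXZ p)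
        - ((N : ℝ) / (M : ℝ)) *
          (∑ p ∈ Finset.univ.filter
            (fun p : X × Z => p.1 ∈ C ∧ t * (QX p.1 * QZ p.2) ≤ PXZ p), QX p.1 * QZ p.2)
        ≤ dTV PWZ (fun p : Fin M × Z => ((M : ℝ))⁻¹ * QZ p.2) :=
  stmt10_general C N hN Wch hW M π enc henc hsupp PWZ hPWZ PXZ hPXZ QX hQX QZ hQZ
end
end

section
/- Let X and Z be finite nonempty sets, C ⊆ X with |C| = K·M for positive integers K, M, P_X the uniform distribution on C, P_{Z|X} a channel from X to Z, P_{XZ} := P_X × P_{Z|X} with output marginal P_Z, and let π₀ : C → {1,…,M} have all fibers of size K. Let σ be a uniformly random permutation of C and Π := π₀ ∘ σ. Then for every γ > 0 and every PMF Q_Z on Z with Q_Z(z) > 0 for all z: E_σ[ d(P_{Π(X)Z}, Unif_M × P_Z) ] ≤ E_γ(P_{XZ}, P_X × Q_Z) + (1/2)·√( (γ/K)·Σ_{x∈C,z∈Z} P_{XZ}(x,z)·exp(−|ln(P_{Z|X}(z|x)/Q_Z(z)) − ln γ|) ), where for each fixed σ, P_{Π(X)Z}(m,z) := Σ_{x∈C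 : π₀(σ(x)) = m} P_X(x)·P_{Z|X}(z|x), Unif_M is the uniform PMF on {1,…,M}, and summands with P_{XZ}(x,z) = 0 read as 0. -/
/-!
Split the channel as `W = min(W, γ Q) + (W - γ Q)⁺`. The excess part has `P_X`-mass exactly
`E_γ(P_{XZ}, P_X × Q_Z)`, so for every σ it moves the total variation distance by at most that
much. For the truncated part `T`, the deviation of `P_{Π(X)Z}(m, z)` from `P_Z(z) / M` is the
deviation of a sum of `P_X T(·, z)` over a uniformly random `K`-subset of `C` from its mean, and
sampling without replacement bounds its second moment over σ by `(1/M) Σ_c (P_X T(c, z))²`.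
Cauchy–Schwarz over `(σ, m, z)` with weights `Q_Z(z)` turns these second moments into the square
root term, since `min(w, γ q)² = γ q w exp(-|log(w/q) - log γ|)`.
-/

open scoped Classical
open Finset

noncomputable section

open scoped Nat

namespace Equiv.Perm

variable {α : Type*} [Fintype α] [DecidableEq α]

theorem card_smul_sum_apply {M : Type*} [AddCommMonoid M] (g : α → M) (c : α) :
    Fintype.card α • ∑ σ : Perm α, g (σ c) = (Fintype.card α)! • ∑ a, g a := by
  have hc : ∀ d, ∑ σ : Perm α, g (σ d) = ∑ σ : Perm α, g (σ c) := fun d => by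
    rw [← Equiv.sum_comp (Equiv.mulRight (swap d c))]
    simp [mul_apply]
  calc Fintype.card α • ∑ σ : Perm α, g (σ c) = ∑ d, ∑ σ : Perm α, g (σ d) := by
        simp [hc, card_univ]
    _ = ∑ σ : Perm α, ∑ d, g (σ d) := sum_comm
    _ = (Fintype.card α)! • ∑ a, g a := by
        simp [Equiv.sum_comp, card_univ, Fintype.card_perm]

theorem card_pred_smul_sum_apply_apply {M : Type*} [AddCommGroup M] (g : α → α → M)
    {c c' : α} (hcc' : c ≠ c') :
    (Fintype.card α - 1) • ∑ σ : Perm α, g (σ c) (σ c')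
      = ∑ σ : Perm α, (∑ b, g (σ c) b - g (σ c) (σ c)) := by
  have hc' : ∀ d ∈ univ.erase c,
      ∑ σ : Perm α, g (σ c) (σ d) = ∑ σ : Perm α, g (σ c) (σ c') := fun d hd => by
    rw [← Equiv.sum_comp (Equiv.mulRight (swap d c'))]
    simp [mul_apply, swap_apply_of_ne_of_ne (ne_of_mem_erase hd).symm hcc']
  calc (Fintype.card α - 1) • ∑ σ : Perm α, g (σ c) (σ c')
      = ∑ d ∈ univ.erase c, ∑ σ : Perm α, g (σ c) (σ d) := by
        rw [sum_congr rfl hc', sum_const, card_erase_of_mem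
          (mem_univ c), card_univ]
    _ = ∑ σ : Perm α, (∑ b, g (σ c) b - g (σ c) (σ c)) := by
        rw [sum_comm]
        refine sum_congr rfl fun σ _ => ?_
        rw [sum_erase_eq_sub (mem_univ c), Equiv.sum_comp σ (g (σ c))]

theorem sum_apply_eq_factorial_mul_sum_div (u : α → ℝ) (c : α) :
    ∑ σ : Perm α, u (σ c) = (Fintype.card α)! * ((∑ a, u a) / Fintype.card α) := by
  have hn : (Fintype.card α : ℝ) ≠ 0 := Nat.cast_ne_zero.2 (Fintype.card_pos_iff.2 ⟨c⟩).ne'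
  have h := card_smul_sum_apply u c
  rw [nsmul_eq_mul, nsmul_eq_mul] at h
  field_simp
  linarith

theorem sum_apply_mul_apply_le (u : α → ℝ) (c c' : α) :
    ∑ σ : Perm α, u (σ c) * u (σ c')
      ≤ (Fintype.card α)! * (((∑ a, u a) / Fintype.card α) ^ 2
          + if c = c' then (∑ a, u a ^ 2) / Fintype.card α else 0) := by
  have hN : (0 : ℝ) < (Fintype.card α)! := by positivity
  rcases eq_or_ne c c' with rfl | hcc'
  · simp only [if_true, ← sq, sum_apply_eq_factorial_mul_sum_div (fun a => u a ^ 2)]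
    nlinarith [sq_nonneg ((∑ a, u a) / Fintype.card α)]
  · have hn2 : 2 ≤ Fintype.card α := Fintype.one_lt_card_iff_nontrivial.2 ⟨c, c', hcc'⟩
    have hn : (2 : ℝ) ≤ Fintype.card α := by exact_mod_cast hn2
    -- `n (n - 1) Σ_σ u (σ c) u (σ c') = n! ((Σ u)² - Σ u²)`, and `(Σ u)² ≤ n Σ u²`
    have hpair := card_pred_smul_sum_apply_apply (fun a b => u a * u b) hcc'
    simp only [← mul_sum] at hpair
    have hsingle := card_smul_sum_apply (fun a => u a * ∑ b, u b - u a * u a) c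
    rw [← hpair, smul_smul, nsmul_eq_mul, nsmul_eq_mul, sum_sub_distrib,
      ← sum_mul, Nat.cast_mul, Nat.cast_sub (by omega)] at hsingle
    have hcs := sq_sum_le_card_mul_sum_sq (s := univ) (f := u)
    rw [card_univ] at hcs
    simp only [hcc', if_false, add_zero]
    rw [div_pow, mul_div_assoc', le_div_iff₀ (by positivity)]
    simp only [← sq, Nat.cast_one] at hsingle
    refine le_of_mul_le_mul_right ?_ (by linarith : (0 : ℝ) < Fintype.card α - 1)
    nlinarith [mul_le_mul_of_nonneg_left hcs hN.le]

theorem sum_sq_sum_mul_apply_sub_le (f u : α → ℝ) (hf : ∀ c, 0 ≤ f c) :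
    ∑ σ : Perm α, (∑ c, f c * u (σ c) - (∑ a, u a) / Fintype.card α * ∑ c, f c) ^ 2
      ≤ (Fintype.card α)! * ((∑ a, u a ^ 2) / Fintype.card α) * ∑ c, f c ^ 2 := by
  set N := ((Fintype.card α)! : ℝ)
  set κ := (∑ a, u a) / Fintype.card α
  set ρ := (∑ a, u a ^ 2) / Fintype.card α
  set S := fun σ : Perm α => ∑ c, f c * u (σ c)
  have hmean : ∑ σ : Perm α, S σ = N * κ * ∑ c, f c := by
    rw [sum_comm]
    simp only [← mul_sum, sum_apply_eq_factorial_mul_sum_div, ← sum_mul]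
    ring
  have hsq : ∑ σ : Perm α, S σ ^ 2 ≤ N * κ ^ 2 * (∑ c, f c) ^ 2 + N * ρ * ∑ c, f c ^ 2 :=
    calc ∑ σ : Perm α, S σ ^ 2
        = ∑ c, ∑ c', f c * f c' * ∑ σ : Perm α, u (σ c) * u (σ c') := by
          simp only [S, sq, sum_mul_sum]
          simp only [mul_sum]
          rw [sum_comm]
          refine sum_congr rfl fun c _ => ?_
          rw [sum_comm]
          exact sum_congr rfl fun c' _ => sum_congr rfl fun σ _ => by ring
      _ ≤ ∑ c, ∑ c', f c * f c' * (N * (κ ^ 2 + if c = c' then ρ else 0)) :=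
          sum_le_sum fun c _ => sum_le_sum fun c' _ =>
            mul_le_mul_of_nonneg_left (sum_apply_mul_apply_le u c c')
              (mul_nonneg (hf c) (hf c'))
      _ = N * κ ^ 2 * (∑ c, f c) ^ 2 + N * ρ * ∑ c, f c ^ 2 := by
          simp only [mul_add, mul_ite, mul_zero, sum_add_distrib, sum_ite_eq,
            mem_univ, if_true]
          simp only [← sum_mul, ← mul_sum, sq]
          ring
  have hcard : ∑ _σ : Perm α, (1 : ℝ) = N := by
    simp [N, card_univ, Fintype.card_perm]
  calc ∑ σ : Perm α, (S σ - κ * ∑ c, f c) ^ 2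
      = ∑ σ : Perm α, (S σ ^ 2 - 2 * (κ * ∑ c, f c) * S σ + (κ * ∑ c, f c) ^ 2 * 1) :=
        sum_congr rfl fun σ _ => by ring
    _ = ∑ σ : Perm α, S σ ^ 2 - 2 * (κ * ∑ c, f c) * ∑ σ : Perm α, S σ
          + (κ * ∑ c, f c) ^ 2 * ∑ _σ : Perm α, (1 : ℝ) := by
        rw [sum_add_distrib, sum_sub_distrib, ← mul_sum, ← mul_sum]
    _ ≤ N * ρ * ∑ c, f c ^ 2 := by
        rw [hmean, hcard]
        nlinarith [hsq]

end Equiv.Perm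

theorem min_add_max_sub_eq (a b : ℝ) : min a b + max (a - b) 0 = a := by
  rcases le_total a b with h | h
  · rw [min_eq_left h, max_eq_right (sub_nonpos.2 h), add_zero]
  · rw [min_eq_right h, max_eq_left (sub_nonneg.2 h)]
    ring

theorem sq_min_mul_eq_mul_exp_neg_abs_log_sub_log {a q γ : ℝ} (ha : 0 ≤ a) (hq : 0 < q)
    (hγ : 0 < γ) :
    min a (γ * q) ^ 2 = γ * q * a * Real.exp (-|Real.log (a / q) - Real.log γ|) := by
  rcases ha.eq_or_lt with rfl | ha
  · simp [(mul_pos hγ hq).le]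
  have hb : 0 < γ * q := mul_pos hγ hq
  rw [← Real.log_div (div_pos ha hq).ne' hγ.ne', div_div, mul_comm q]
  rcases le_total a (γ * q) with hab | hab
  · rw [min_eq_left hab, abs_of_nonpos (Real.log_nonpos (by positivity)
      ((div_le_one hb).2 hab)), neg_neg, Real.exp_log (by positivity)]
    field_simp
  · rw [min_eq_right hab, abs_of_nonneg (Real.log_nonneg ((one_le_div hb).2 hab)),
      Real.exp_neg, Real.exp_log (by positivity)]
    field_simp

theorem sum_sum_sq_mul_min_div_eq {α Z : Type*} [Fintype α] [Fintype Z] {W : α → Z → ℝ}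
    (hW : ∀ c z, 0 ≤ W c z) {Q : Z → ℝ} (hQ : ∀ z, 0 < Q z) {γ : ℝ} (hγ : 0 < γ) (a : ℝ) :
    ∑ c, ∑ z, (a * min (W c z) (γ * Q z)) ^ 2 / Q z
      = a ^ 2 * γ * ∑ c, ∑ z, W c z * Real.exp (-|Real.log (W c z / Q z) - Real.log γ|) := by
  simp only [mul_sum]
  refine sum_congr rfl fun c _ => sum_congr rfl fun z _ => ?_
  rw [mul_pow, sq_min_mul_eq_mul_exp_neg_abs_log_sub_log (hW c z) (hQ z) hγ]
  field_simp [(hQ z).ne']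

theorem Egam_eq_sum_max {A : Type*} [Fintype A] (γ : ℝ) (P Q : A → ℝ) :
    Egam γ P Q = ∑ a, max (P a - γ * Q a) 0 := by
  rw [Egam, sum_filter]
  refine sum_congr rfl fun a _ => ?_
  split_ifs with h
  · exact (max_eq_left (sub_nonneg.2 h)).symm
  · exact (max_eq_right (sub_nonpos.2 (not_le.1 h).le)).symm

theorem Egam_prod_eq {X Z : Type*} [Fintype X] [Fintype Z] (γ : ℝ) {P : X → ℝ}
    (hP : ∀ x, 0 ≤ P x) (W : X → Z → ℝ) (Q : Z → ℝ) :
    Egam γ (fun p : X × Z => P p.1 * W p.1 p.2) (fun p => P p.1 * Q p.2)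
      = ∑ x, P x * ∑ z, max (W x z - γ * Q z) 0 := by
  rw [Egam_eq_sum_max, Fintype.sum_prod_type]
  refine sum_congr rfl fun x _ => ?_
  rw [mul_sum]
  refine sum_congr rfl fun z _ => ?_
  rw [mul_max_of_nonneg _ _ (hP x), mul_zero, mul_sub, mul_left_comm]

theorem dTV_add_le {A : Type*} [Fintype A] (P₁ P₂ Q₁ Q₂ : A → ℝ) :
    dTV (P₁ + P₂) (Q₁ + Q₂) ≤ dTV P₁ Q₁ + dTV P₂ Q₂ := by
  simp only [dTV, ← mul_add, ← sum_add_distrib, Pi.add_apply]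
  gcongr with a
  rw [add_sub_add_comm]
  exact abs_add_le _ _

theorem dTV_le_of_nonneg {A : Type*} [Fintype A] {P Q : A → ℝ} (hP : ∀ a, 0 ≤ P a)
    (hQ : ∀ a, 0 ≤ Q a) : dTV P Q ≤ (∑ a, P a + ∑ a, Q a) / 2 := by
  rw [dTV, ← sum_add_distrib, one_div_mul_eq_div]
  gcongr with a
  exact abs_sub_le_iff.2 ⟨by linarith [hQ a], by linarith [hP a]⟩

section HashedJoint

variable {α ι Z : Type*} [Fintype α]

/-- With `V c z = P_X(c) P_{Z|X}(z|c)`, `hashedJoint π σ V` is the joint law of `(π (σ X), Z)`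
and `unifProd ι V` is `Unif_ι × P_Z`. -/
def hashedJoint [DecidableEq ι] (π : α → ι) (σ : Equiv.Perm α) (V : α → Z → ℝ) : ι × Z → ℝ :=
  fun p => ∑ c, if π (σ c) = p.1 then V c p.2 else 0

def unifProd (ι : Type*) [Fintype ι] (V : α → Z → ℝ) : ι × Z → ℝ :=
  fun p => (Fintype.card ι : ℝ)⁻¹ * ∑ c, V c p.2

theorem unifProd_add [Fintype ι] (V W : α → Z → ℝ) :
    unifProd ι (V + W) = unifProd ι V + unifProd ι W := by
  ext p
  simp only [unifProd, Pi.add_apply, sum_add_distrib, mul_add]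

theorem sum_unifProd [Fintype ι] [Nonempty ι] [Fintype Z] (V : α → Z → ℝ) :
    ∑ p, unifProd ι V p = ∑ c, ∑ z, V c z := by
  have hι : (Fintype.card ι : ℝ) ≠ 0 := Nat.cast_ne_zero.2 Fintype.card_ne_zero
  simp only [unifProd, Fintype.sum_prod_type, sum_const, card_univ, nsmul_eq_mul,
    ← mul_sum, ← mul_assoc, inv_mul_cancel₀ hι, one_mul]
  exact sum_comm

variable [DecidableEq ι] (π : α → ι) (σ : Equiv.Perm α)

theorem hashedJoint_add (V W : α → Z → ℝ) :
    hashedJoint π σ (V + W) = hashedJoint π σ V + hashedJoint π σ W := by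
  ext p
  simp only [hashedJoint, Pi.add_apply, ← sum_add_distrib]
  exact sum_congr rfl fun c _ => by split_ifs <;> simp

theorem sum_hashedJoint [Fintype ι] [Fintype Z] (V : α → Z → ℝ) :
    ∑ p, hashedJoint π σ V p = ∑ c, ∑ z, V c z := by
  simp only [hashedJoint, Fintype.sum_prod_type]
  calc ∑ m, ∑ z, ∑ c, (if π (σ c) = m then V c z else 0)
      = ∑ z, ∑ c, ∑ m, (if π (σ c) = m then V c z else 0) := by
        rw [sum_comm]
        exact sum_congr rfl fun z _ => sum_comm
    _ = ∑ c, ∑ z, V c z := by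
        simp only [sum_ite_eq, mem_univ, if_true]
        exact sum_comm

theorem dTV_hashedJoint_add_le [Fintype ι] [Nonempty ι] [Fintype Z] (T : α → Z → ℝ)
    {R : α → Z → ℝ} (hR : ∀ c z, 0 ≤ R c z) :
    dTV (hashedJoint π σ (T + R)) (unifProd ι (T + R))
      ≤ dTV (hashedJoint π σ T) (unifProd ι T) + ∑ c, ∑ z, R c z := by
  rw [hashedJoint_add, unifProd_add]
  refine (dTV_add_le _ _ _ _).trans (add_le_add le_rfl ?_)
  refine (dTV_le_of_nonneg (fun p => ?_) (fun p => ?_)).trans_eq ?_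
  · exact sum_nonneg fun c _ => by split_ifs <;> simp [hR]
  · exact mul_nonneg (by positivity) (sum_nonneg fun c _ => hR c p.2)
  · rw [sum_hashedJoint, sum_unifProd]
    ring

end HashedJoint

section RandomHashing

variable {α ι Z : Type*} [Fintype α] [DecidableEq α] [Nonempty α] [Fintype ι] [DecidableEq ι]
  {π : α → ι}

theorem sum_sq_hashedJoint_sub_unifProd_le
    (hfib : ∀ m, (univ.filter (π · = m)).card * Fintype.card ι = Fintype.card α)
    (T : α → Z → ℝ) (hT : ∀ c z, 0 ≤ T c z) (p : ι × Z) :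
    ∑ σ : Equiv.Perm α, (hashedJoint π σ T p - unifProd ι T p) ^ 2
      ≤ (Fintype.card α)! / Fintype.card ι * ∑ c, T c p.2 ^ 2 := by
  set u : α → ℝ := fun a => if π a = p.1 then 1 else 0
  have hα : (Fintype.card α : ℝ) ≠ 0 := Nat.cast_ne_zero.2 Fintype.card_ne_zero
  have hι : (Fintype.card ι : ℝ) ≠ 0 := Nat.cast_ne_zero.2 (Fintype.card_pos_iff.2 ⟨p.1⟩).ne'
  have hu : (∑ a, u a) / Fintype.card α = (Fintype.card ι : ℝ)⁻¹ := by
    rw [div_eq_iff hα, sum_boole, ← hfib p.1, Nat.cast_mul]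
    field_simp
  have hu2 : ∑ a, u a ^ 2 = ∑ a, u a := sum_congr rfl fun a _ => by simp [u]
  have h := Equiv.Perm.sum_sq_sum_mul_apply_sub_le (fun c => T c p.2) u (fun c => hT c p.2)
  rw [hu2, hu] at h
  convert h using 3 with σ
  · simp only [hashedJoint, unifProd, u, mul_boole]
  · rw [div_eq_mul_inv]

theorem sum_sum_sq_hashedJoint_sub_unifProd_div_le [Nonempty ι] [Fintype Z]
    (hfib : ∀ m, (univ.filter (π · = m)).card * Fintype.card ι = Fintype.card α)
    (T : α → Z → ℝ) (hT : ∀ c z, 0 ≤ T c z) {Q : Z → ℝ} (hQ : ∀ z, 0 < Q z) :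
    ∑ σ : Equiv.Perm α, ∑ p, (hashedJoint π σ T p - unifProd ι T p) ^ 2 / Q p.2
      ≤ (Fintype.card α)! * ∑ c, ∑ z, T c z ^ 2 / Q z := by
  have hι : (Fintype.card ι : ℝ) ≠ 0 := Nat.cast_ne_zero.2 Fintype.card_ne_zero
  calc ∑ σ : Equiv.Perm α, ∑ p, (hashedJoint π σ T p - unifProd ι T p) ^ 2 / Q p.2
      = ∑ p : ι × Z, (∑ σ : Equiv.Perm α, (hashedJoint π σ T p - unifProd ι T p) ^ 2) / Q p.2 := by
        rw [sum_comm]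
        simp only [sum_div]
    _ ≤ ∑ p : ι × Z, ((Fintype.card α)! / Fintype.card ι * ∑ c, T c p.2 ^ 2) / Q p.2 :=
        sum_le_sum fun p _ => div_le_div_of_nonneg_right
          (sum_sq_hashedJoint_sub_unifProd_le hfib T hT p) (hQ p.2).le
    _ = (Fintype.card α)! * ∑ c, ∑ z, T c z ^ 2 / Q z := by
        simp only [Fintype.sum_prod_type, sum_const, card_univ, nsmul_eq_mul,
          mul_sum, sum_div]
        rw [sum_comm]
        field_simp

theorem sum_dTV_hashedJoint_div_le [Nonempty ι] [Fintype Z]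
    (hfib : ∀ m, (univ.filter (π · = m)).card * Fintype.card ι = Fintype.card α)
    (T : α → Z → ℝ) (hT : ∀ c z, 0 ≤ T c z) {Q : Z → ℝ} (hQ : ∀ z, 0 < Q z)
    (hQ1 : ∑ z, Q z = 1) :
    (∑ σ : Equiv.Perm α, dTV (hashedJoint π σ T) (unifProd ι T)) / (Fintype.card α)!
      ≤ 1 / 2 * √(Fintype.card ι * ∑ c, ∑ z, T c z ^ 2 / Q z) := by
  set N := ((Fintype.card α)! : ℝ)
  set S := ∑ c, ∑ z, T c z ^ 2 / Q z
  set D : Equiv.Perm α × (ι × Z) → ℝ := fun q => hashedJoint π q.1 T q.2 - unifProd ι T q.2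
  have hN : 0 < N := by positivity
  have hdTV : ∑ σ : Equiv.Perm α, dTV (hashedJoint π σ T) (unifProd ι T)
      = 1 / 2 * ∑ q, |D q| := by
    simp only [dTV, ← mul_sum, Fintype.sum_prod_type (f := fun q => |D q|), D]
  have hmass : ∑ q : Equiv.Perm α × (ι × Z), Q q.2.2 = N * Fintype.card ι := by
    simp [Fintype.sum_prod_type, hQ1, N, card_univ, Fintype.card_perm]
  have hvar : ∑ q, D q ^ 2 / Q q.2.2 ≤ N * S := by
    rw [Fintype.sum_prod_type]
    exact sum_sum_sq_hashedJoint_sub_unifProd_div_le hfib T hT hQ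
  -- Cauchy–Schwarz over `(σ, m, z)` with weights `Q z`
  have hCS : (∑ q, |D q|) ^ 2 ≤ (N * Fintype.card ι) * (N * S) := by
    have h := sum_sq_le_sum_mul_sum_of_sq_le_mul univ (r := fun q => |D q|)
      (fun q _ => div_nonneg (sq_nonneg (D q)) (hQ q.2.2).le) (fun q _ => (hQ q.2.2).le)
      (fun q _ => by rw [sq_abs, div_mul_cancel₀ _ (hQ q.2.2).ne'])
    rw [hmass, mul_comm] at h
    exact h.trans (mul_le_mul_of_nonneg_left hvar (by positivity))
  have hbound : ∑ q, |D q| ≤ N * √(Fintype.card ι * S) := by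
    rw [← Real.sqrt_sq hN.le, ← Real.sqrt_mul (sq_nonneg N)]
    exact Real.le_sqrt_of_sq_le (by nlinarith [hCS])
  rw [hdTV, div_le_iff₀ hN]
  nlinarith [hbound]

theorem sum_dTV_hashedJoint_add_div_le [Nonempty ι] [Fintype Z]
    (hfib : ∀ m, (univ.filter (π · = m)).card * Fintype.card ι = Fintype.card α)
    {T R : α → Z → ℝ} (hT : ∀ c z, 0 ≤ T c z) (hR : ∀ c z, 0 ≤ R c z) {Q : Z → ℝ}
    (hQ : ∀ z, 0 < Q z) (hQ1 : ∑ z, Q z = 1) :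
    (∑ σ : Equiv.Perm α, dTV (hashedJoint π σ (T + R)) (unifProd ι (T + R)))
        / (Fintype.card α)!
      ≤ 1 / 2 * √(Fintype.card ι * ∑ c, ∑ z, T c z ^ 2 / Q z) + ∑ c, ∑ z, R c z := by
  have hN : (0 : ℝ) < (Fintype.card α)! := by positivity
  calc (∑ σ : Equiv.Perm α, dTV (hashedJoint π σ (T + R)) (unifProd ι (T + R)))
        / (Fintype.card α)!
      ≤ (∑ σ : Equiv.Perm α, (dTV (hashedJoint π σ T) (unifProd ι T) + ∑ c, ∑ z, R c z))
          / (Fintype.card α)! := by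
        gcongr with σ
        exact dTV_hashedJoint_add_le π σ T hR
    _ = (∑ σ : Equiv.Perm α, dTV (hashedJoint π σ T) (unifProd ι T)) / (Fintype.card α)!
          + ∑ c, ∑ z, R c z := by
        rw [sum_add_distrib, sum_const, card_univ, Fintype.card_perm,
          nsmul_eq_mul, add_div, mul_div_cancel_left₀ _ hN.ne']
    _ ≤ _ := by
        gcongr
        exact sum_dTV_hashedJoint_div_le hfib T hT hQ hQ1

theorem sum_dTV_hashedJoint_const_mul_div_le [Nonempty ι] [Fintype Z]
    (hfib : ∀ m, (univ.filter (π · = m)).card * Fintype.card ι = Fintype.card α)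
    {a : ℝ} (ha : 0 ≤ a) {W : α → Z → ℝ} (hW : ∀ c z, 0 ≤ W c z) {Q : Z → ℝ}
    (hQ : ∀ z, 0 < Q z) (hQ1 : ∑ z, Q z = 1) {γ : ℝ} (hγ : 0 < γ) :
    (∑ σ : Equiv.Perm α, dTV (hashedJoint π σ fun c z => a * W c z)
          (unifProd ι fun c z => a * W c z)) / (Fintype.card α)!
      ≤ 1 / 2 * √(Fintype.card ι * (a ^ 2 * γ * ∑ c, ∑ z,
            W c z * Real.exp (-|Real.log (W c z / Q z) - Real.log γ|)))
        + ∑ c, ∑ z, a * max (W c z - γ * Q z) 0 := by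
  have hsplit : (fun c z => a * W c z)
      = (fun c z => a * min (W c z) (γ * Q z)) + fun c z => a * max (W c z - γ * Q z) 0 := by
    ext c z
    simp only [Pi.add_apply, ← mul_add, min_add_max_sub_eq]
  rw [hsplit, ← sum_sum_sq_mul_min_div_eq hW hQ hγ a]
  exact sum_dTV_hashedJoint_add_div_le hfib
    (fun c z => mul_nonneg ha (le_min (hW c z) (mul_pos hγ (hQ z)).le))
    (fun c z => mul_nonneg ha (le_max_right _ _)) hQ hQ1

end RandomHashing

theorem stmt14_general {X Z : Type*} [Fintype X] [Fintype Z] [DecidableEq X]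
    (K M : ℕ) (hK : 0 < K) (hM : 0 < M)
    (C : Finset X) (hC : C.card = K * M)
    (PX : X → ℝ) (hPX : ∀ x, PX x = if x ∈ C then (((K * M : ℕ) : ℝ))⁻¹ else 0)
    (Wch : X → Z → ℝ) (hW : ∀ x, IsPMF (Wch x))
    (π₀ : {x : X // x ∈ C} → Fin M)
    (hfib : ∀ m : Fin M,
      (Finset.univ.filter (fun c : {x : X // x ∈ C} => π₀ c = m)).card = K)
    (γ : ℝ) (hγ : 0 < γ)
    (QZ : Z → ℝ) (hQZ : IsPMF QZ) (hQZpos : ∀ z, 0 < QZ z) :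
    (∑ σ : Equiv.Perm {x : X // x ∈ C},
        dTV (fun p : Fin M × Z =>
              ∑ c : {x : X // x ∈ C},
                if π₀ (σ c) = p.1 then PX c.1 * Wch c.1 p.2 else 0)
            (fun p : Fin M × Z => ((M : ℝ))⁻¹ * ∑ x, PX x * Wch x p.2))
        / (((K * M).factorial : ℝ))
      ≤ Egam γ (fun p : X × Z => PX p.1 * Wch p.1 p.2)
            (fun p : X × Z => PX p.1 * QZ p.2)
        + (1 / 2) * Real.sqrt ((γ / K) *
            ∑ x ∈ C, ∑ z, PX x * Wch x z *
              Real.exp (-|Real.log (Wch x z / QZ z) - Real.log γ|)) := by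
  have hcard : Fintype.card C = K * M := by rw [Fintype.card_coe, hC]
  have : Nonempty C := Fintype.card_pos_iff.1 (hcard ▸ Nat.mul_pos hK hM)
  have : Nonempty (Fin M) := ⟨⟨0, hM⟩⟩
  have hPXC : ∀ c : C, PX c = ((K * M : ℕ) : ℝ)⁻¹ := fun c => by simp [hPX, c.2]
  have hsupp : ∀ g : X → ℝ, ∑ x, PX x * g x = ∑ c : C, PX c * g c := fun g => by
    rw [sum_coe_sort C (fun x => PX x * g x)]
    exact (sum_subset (subset_univ C) fun x _ hx => by simp [hPX, hx]).symm
  have hfib' : ∀ m, (univ.filter (π₀ · = m)).card * Fintype.card (Fin M)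
      = Fintype.card C := fun m => by rw [hfib, Fintype.card_fin, hcard]
  calc _ = (∑ σ : Equiv.Perm C,
          dTV (hashedJoint π₀ σ fun (c : C) z => ((K * M : ℕ) : ℝ)⁻¹ * Wch c z)
            (unifProd (Fin M) fun (c : C) z => ((K * M : ℕ) : ℝ)⁻¹ * Wch c z))
          / (Fintype.card C)! := by
        unfold hashedJoint unifProd
        simp only [hcard, Fintype.card_fin, hsupp, hPXC]
    _ ≤ _ := sum_dTV_hashedJoint_const_mul_div_le hfib' (a := ((K * M : ℕ) : ℝ)⁻¹)
          (by positivity) (W := fun (c : C) z => Wch c z) (fun c z => (hW c).1 z) hQZpos hQZ.2 hγ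
    _ = _ := by
        rw [add_comm, Egam_prod_eq γ (fun x => by rw [hPX]; positivity), hsupp,
          ← sum_coe_sort C]
        simp only [hPXC, Fintype.card_fin, mul_sum]
        congr 3
        refine sum_congr rfl fun c _ => sum_congr rfl fun z _ => ?_
        push_cast
        field_simp

/-- Averaged privacy-amplification bound (Eq. (55)): the average over all
permutations `σ` of `C` of the secrecy `d(P_{Π(X)Z}, Unif_M × P_Z)` with
`Π = π₀ ∘ σ` is bounded by the `E_γ` term plus the square-root term. -/
theorem stmt14 {X Z : Type*} [Fintype X] [Fintype Z] [DecidableEq X]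
    [Nonempty X] [Nonempty Z]
    (K M : ℕ) (hK : 0 < K) (hM : 0 < M)
    (C : Finset X) (hC : C.card = K * M)
    (PX : X → ℝ) (hPX : ∀ x, PX x = if x ∈ C then (((K * M : ℕ) : ℝ))⁻¹ else 0)
    (Wch : X → Z → ℝ) (hW : ∀ x, IsPMF (Wch x))
    (π₀ : {x : X // x ∈ C} → Fin M)
    (hfib : ∀ m : Fin M,
      (Finset.univ.filter (fun c : {x : X // x ∈ C} => π₀ c = m)).card = K)
    (γ : ℝ) (hγ : 0 < γ)
    (QZ : Z → ℝ) (hQZ : IsPMF QZ) (hQZpos : ∀ z, 0 < QZ z) :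
    (∑ σ : Equiv.Perm {x : X // x ∈ C},
        dTV (fun p : Fin M × Z =>
              ∑ c : {x : X // x ∈ C},
                if π₀ (σ c) = p.1 then PX c.1 * Wch c.1 p.2 else 0)
            (fun p : Fin M × Z => ((M : ℝ))⁻¹ * ∑ x, PX x * Wch x p.2))
        / (((K * M).factorial : ℝ))
      ≤ Egam γ (fun p : X × Z => PX p.1 * Wch p.1 p.2)
            (fun p : X × Z => PX p.1 * QZ p.2)
        + (1 / 2) * Real.sqrt ((γ / K) *
            ∑ x ∈ C, ∑ z, PX x * Wch x z *
              Real.exp (-|Real.log (Wch x z / QZ z) - Real.log γ|)) :=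
  stmt14_general K M hK hM C hC PX hPX Wch hW π₀ hfib γ hγ QZ hQZ hQZpos
end
end
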